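/- arXiv:0705.2480 — 4 statements merged into one kernel-verified Lean document; each statement's English description precedes it below -/
import Mathlib

section
/- For any connected k-regular distance-regular graph on N vertices with unit resistors, the effective resistance between any two adjacent nodes equals 2(N−1)/(N·k). -/
open Matrix

/-- The four Moore–Penrose pseudoinverse conditions for real matrices. -/
def IsMoorePenrose {V : Type*} [Fintype V] [DecidableEq V] (L Lp : Matrix V V ℝ) : Prop :=
  L * Lp * L = L ∧ Lp * L * Lp = Lp ∧ (L * Lp)ᵀ = L * Lp ∧ (Lp * L)ᵀ = Lp * L

/-- Effective resistance between two nodes, from the pseudoinverse of the Laplacian. -/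
def effRes {V : Type*} (Lp : Matrix V V ℝ) (α β : V) : ℝ :=
  Lp α α + Lp β β - 2 * Lp α β

/-- A connected graph is distance-regular with diameter `d` and intersection numbers
`b i`, `c i` if for any vertices `α, β` at distance `i ≤ d`, the number of neighbors of `β`
at distance `i+1` (resp. `i-1`) from `α` equals `b i` (resp. `c i`). -/
def IsDistanceRegular {V : Type*} [Fintype V] (G : SimpleGraph V) (d : ℕ) (b c : ℕ → ℕ) : Prop :=
  G.Connected ∧ (∀ α β : V, G.dist α β ≤ d) ∧
  ∀ i, i ≤ d → ∀ α β : V, G.dist α β = i →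
    ({γ : V | G.Adj β γ ∧ G.dist α γ = i + 1}.ncard = b i ∧
     {γ : V | G.Adj β γ ∧ G.dist α γ = i - 1}.ncard = c i)

set_option linter.unusedSectionVars false
set_option maxHeartbeats 1000000

open Finset

private lemma MP_unique {V : Type*} [Fintype V] [DecidableEq V] {L P Q : Matrix V V ℝ}
    (hP : IsMoorePenrose L P) (hQ : IsMoorePenrose L Q) : P = Q := by
  obtain ⟨p1, p2, p3, p4⟩ := hP
  obtain ⟨q1, q2, q3, q4⟩ := hQ
  have p3' : Pᵀ * Lᵀ = L * P := by rw [← Matrix.transpose_mul]; exact p3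
  have q3' : Qᵀ * Lᵀ = L * Q := by rw [← Matrix.transpose_mul]; exact q3
  have p4' : Lᵀ * Pᵀ = P * L := by rw [← Matrix.transpose_mul]; exact p4
  have q4' : Lᵀ * Qᵀ = Q * L := by rw [← Matrix.transpose_mul]; exact q4
  have h1 : L * P = L * Q := by
    calc L * P = (L * Q * L) * P := by rw [q1]
      _ = L * Q * (L * P) := by rw [Matrix.mul_assoc]
      _ = Qᵀ * Lᵀ * (Pᵀ * Lᵀ) := by rw [q3', p3']
      _ = Qᵀ * (Lᵀ * Pᵀ * Lᵀ) := by simp only [Matrix.mul_assoc]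
      _ = Qᵀ * ((L * P * L)ᵀ) := by simp only [Matrix.transpose_mul, Matrix.mul_assoc]
      _ = Qᵀ * Lᵀ := by rw [p1]
      _ = L * Q := q3'
  have h2 : P * L = Q * L := by
    calc P * L = P * (L * Q * L) := by rw [q1]
      _ = (P * L) * (Q * L) := by simp only [Matrix.mul_assoc]
      _ = (Lᵀ * Pᵀ) * (Lᵀ * Qᵀ) := by rw [p4', q4']
      _ = Lᵀ * (Pᵀ * Lᵀ) * Qᵀ := by simp only [Matrix.mul_assoc]
      _ = ((L * P * L)ᵀ) * Qᵀ := by simp only [Matrix.transpose_mul, Matrix.mul_assoc]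
      _ = Lᵀ * Qᵀ := by rw [p1]
      _ = Q * L := q4'
  calc P = P * L * P := p2.symm
    _ = Q * L * P := by rw [h2]
    _ = Q * (L * P) := by rw [Matrix.mul_assoc]
    _ = Q * (L * Q) := by rw [h1]
    _ = Q * L * Q := by rw [Matrix.mul_assoc]
    _ = Q := q2

private lemma MP_symm {V : Type*} [Fintype V] [DecidableEq V] {L Lp : Matrix V V ℝ}
    (hL : Lᵀ = L) (h : IsMoorePenrose L Lp) : Lpᵀ = Lp := by
  obtain ⟨p1, p2, p3, p4⟩ := h
  have e3 : L * Lpᵀ = Lp * L := by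
    calc L * Lpᵀ = Lᵀ * Lpᵀ := by rw [hL]
      _ = (Lp * L)ᵀ := (Matrix.transpose_mul _ _).symm
      _ = Lp * L := p4
  have e4 : Lpᵀ * L = L * Lp := by
    calc Lpᵀ * L = Lpᵀ * Lᵀ := by rw [hL]
      _ = (L * Lp)ᵀ := (Matrix.transpose_mul _ _).symm
      _ = L * Lp := p3
  refine MP_unique ⟨?_, ?_, ?_, ?_⟩ ⟨p1, p2, p3, p4⟩
  · calc L * Lpᵀ * L = (Lᵀ * Lp * Lᵀ)ᵀ := by simp only [Matrix.transpose_mul, Matrix.transpose_transpose, Matrix.mul_assoc]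
      _ = (L * Lp * L)ᵀ := by rw [hL]
      _ = Lᵀ := by rw [p1]
      _ = L := hL
  · calc Lpᵀ * L * Lpᵀ = (Lp * Lᵀ * Lp)ᵀ := by simp only [Matrix.transpose_mul, Matrix.transpose_transpose, Matrix.mul_assoc]
      _ = (Lp * L * Lp)ᵀ := by rw [hL]
      _ = Lpᵀ := by rw [p2]
  · rw [e3]; exact p4
  · rw [e4]; exact p3

section Aux
variable {V : Type*} [Fintype V] [DecidableEq V] {G : SimpleGraph V} [DecidableRel G.Adj]
  {d k : ℕ} {b c : ℕ → ℕ}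

private lemma dist_adj_le (hc : G.Connected) (α : V) {γ η : V} (h : G.Adj γ η) :
    G.dist α η ≤ G.dist α γ + 1 := by
  have h2 := hc.dist_triangle (u := α) (v := γ) (w := η)
  rwa [SimpleGraph.dist_eq_one_iff_adj.mpr h] at h2

private lemma ncard_eq_card_filter (p : V → Prop) [DecidablePred p] :
    {γ : V | p γ}.ncard = (univ.filter p).card := by
  rw [← Set.ncard_coe_finset]
  congr 1
  ext γ
  simp

private lemma exists_adj_dist (hc : G.Connected) {α γ : V} (h : 1 ≤ G.dist α γ) :
    ∃ δ : V, G.Adj δ γ ∧ G.dist α δ = G.dist α γ - 1 := by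
  obtain ⟨p, hp⟩ := (hc α γ).exists_walk_length_eq_dist
  have hnil : ¬p.reverse.Nil := by
    rw [SimpleGraph.Walk.nil_iff_length_eq, SimpleGraph.Walk.length_reverse]
    omega
  obtain ⟨δ, hadj, q, hq⟩ := SimpleGraph.Walk.not_nil_iff.mp hnil
  refine ⟨δ, hadj.symm, ?_⟩
  have hlen : q.length = G.dist α γ - 1 := by
    have := congrArg SimpleGraph.Walk.length hq
    rw [SimpleGraph.Walk.length_reverse, hp] at this
    simp only [SimpleGraph.Walk.length_cons] at this
    omega
  have h1 : G.dist α δ ≤ G.dist α γ - 1 := by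
    have := G.dist_le q.reverse
    rwa [SimpleGraph.Walk.length_reverse, hlen] at this
  have h2 := dist_adj_le hc α hadj.symm
  omega


variable (hc : G.Connected) (hd : ∀ x y : V, G.dist x y ≤ d)
  (hi : ∀ i, i ≤ d → ∀ x y : V, G.dist x y = i →
      ({γ : V | G.Adj y γ ∧ G.dist x γ = i + 1}.ncard = b i ∧
       {γ : V | G.Adj y γ ∧ G.dist x γ = i - 1}.ncard = c i))
  (hreg : G.IsRegularOfDegree k)

include hd hi in
private lemma count_b (α γ : V) :
    ((G.neighborFinset γ).filter fun η => G.dist α η = G.dist α γ + 1).card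
      = b (G.dist α γ) := by
  have h := (hi _ (hd α γ) α γ rfl).1
  rw [ncard_eq_card_filter] at h
  rw [SimpleGraph.neighborFinset_eq_filter, Finset.filter_filter]
  exact h

include hd hi in
private lemma count_c (α γ : V) :
    ((G.neighborFinset γ).filter fun η => G.dist α η = G.dist α γ - 1).card
      = c (G.dist α γ) := by
  have h := (hi _ (hd α γ) α γ rfl).2
  rw [ncard_eq_card_filter] at h
  rw [SimpleGraph.neighborFinset_eq_filter, Finset.filter_filter]
  exact h

include hc hd hi hreg in
private lemma count_mid (α γ : V) (h1 : 1 ≤ G.dist α γ) :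
    (b (G.dist α γ) : ℝ) + c (G.dist α γ)
      + ((G.neighborFinset γ).filter fun η => G.dist α η = G.dist α γ).card = k := by
  set i := G.dist α γ with hidef
  have hsplit : G.neighborFinset γ =
      ((G.neighborFinset γ).filter fun η => G.dist α η = i - 1) ∪
      (((G.neighborFinset γ).filter fun η => G.dist α η = i) ∪
       ((G.neighborFinset γ).filter fun η => G.dist α η = i + 1)) := by
    ext η
    simp only [Finset.mem_union, Finset.mem_filter, SimpleGraph.mem_neighborFinset]
    constructor
    · intro h
      have ha := dist_adj_le hc α h
      have hb := dist_adj_le hc α h.symm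
      refine (by omega : G.dist α η = i - 1 ∨ G.dist α η = i ∨ G.dist α η = i + 1).imp
        (fun hx => ⟨h, hx⟩) (fun hx => hx.imp (fun hy => ⟨h, hy⟩) (fun hy => ⟨h, hy⟩))
    · rintro (⟨h, _⟩ | ⟨h, _⟩ | ⟨h, _⟩) <;> exact h
  have hd1 : Disjoint ((G.neighborFinset γ).filter fun η => G.dist α η = i - 1)
      (((G.neighborFinset γ).filter fun η => G.dist α η = i) ∪
       ((G.neighborFinset γ).filter fun η => G.dist α η = i + 1)) := by
    simp only [Finset.disjoint_union_right, Finset.disjoint_filter]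
    exact ⟨fun x _ hx => by omega, fun x _ hx => by omega⟩
  have hd2 : Disjoint ((G.neighborFinset γ).filter fun η => G.dist α η = i)
      ((G.neighborFinset γ).filter fun η => G.dist α η = i + 1) := by
    simp only [Finset.disjoint_filter]
    exact fun x _ hx => by omega
  have hcard := congrArg Finset.card hsplit
  rw [Finset.card_union_of_disjoint hd1, Finset.card_union_of_disjoint hd2,
    SimpleGraph.card_neighborFinset_eq_degree, hreg γ, count_c hd hi α γ, count_b hd hi α γ]
    at hcard
  push_cast [hcard]
  ring

include hc hd hi in
private lemma sum_radial (α γ : V) (h1 : 1 ≤ G.dist α γ) (g : ℕ → ℝ) :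
    ∑ η ∈ G.neighborFinset γ, g (G.dist α η)
      = (c (G.dist α γ) : ℝ) * g (G.dist α γ - 1)
        + (((G.neighborFinset γ).filter fun η => G.dist α η = G.dist α γ).card : ℝ)
            * g (G.dist α γ)
        + (b (G.dist α γ) : ℝ) * g (G.dist α γ + 1) := by
  set i := G.dist α γ with hidef
  have hsplit : G.neighborFinset γ =
      ((G.neighborFinset γ).filter fun η => G.dist α η = i - 1) ∪
      (((G.neighborFinset γ).filter fun η => G.dist α η = i) ∪
       ((G.neighborFinset γ).filter fun η => G.dist α η = i + 1)) := by
    ext η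
    simp only [Finset.mem_union, Finset.mem_filter, SimpleGraph.mem_neighborFinset]
    constructor
    · intro h
      have ha := dist_adj_le hc α h
      have hb := dist_adj_le hc α h.symm
      refine (by omega : G.dist α η = i - 1 ∨ G.dist α η = i ∨ G.dist α η = i + 1).imp
        (fun hx => ⟨h, hx⟩) (fun hx => hx.imp (fun hy => ⟨h, hy⟩) (fun hy => ⟨h, hy⟩))
    · rintro (⟨h, _⟩ | ⟨h, _⟩ | ⟨h, _⟩) <;> exact h
  have hd1 : Disjoint ((G.neighborFinset γ).filter fun η => G.dist α η = i - 1)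
      (((G.neighborFinset γ).filter fun η => G.dist α η = i) ∪
       ((G.neighborFinset γ).filter fun η => G.dist α η = i + 1)) := by
    simp only [Finset.disjoint_union_right, Finset.disjoint_filter]
    exact ⟨fun x _ hx => by omega, fun x _ hx => by omega⟩
  have hd2 : Disjoint ((G.neighborFinset γ).filter fun η => G.dist α η = i)
      ((G.neighborFinset γ).filter fun η => G.dist α η = i + 1) := by
    simp only [Finset.disjoint_filter]
    exact fun x _ hx => by omega
  have hval : ∀ j : ℕ, ∑ η ∈ ((G.neighborFinset γ).filter fun η => G.dist α η = j),
      g (G.dist α η)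
      = ((((G.neighborFinset γ).filter fun η => G.dist α η = j)).card : ℝ) * g j := by
    intro j
    rw [Finset.sum_congr rfl (fun η hη => by rw [(Finset.mem_filter.mp hη).2]),
      Finset.sum_const, nsmul_eq_mul]
  conv_lhs => rw [hsplit]
  rw [Finset.sum_union hd1, Finset.sum_union hd2, hval, hval, hval,
    count_c hd hi α γ, count_b hd hi α γ]
  ring

private lemma fubini (α : V) (i j : ℕ) (f : V → ℝ) :
    (∑ δ ∈ univ.filter fun x => G.dist α x = i,
      ∑ η ∈ (G.neighborFinset δ).filter fun η => G.dist α η = j, f η)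
    = ∑ η ∈ univ.filter fun x => G.dist α x = j,
        (((G.neighborFinset η).filter fun δ => G.dist α δ = i).card : ℝ) * f η := by
  have lhs_eq : (∑ δ ∈ univ.filter fun x => G.dist α x = i,
      ∑ η ∈ (G.neighborFinset δ).filter fun η => G.dist α η = j, f η)
      = ∑ δ : V, ∑ η : V,
          if G.dist α δ = i ∧ (G.Adj δ η ∧ G.dist α η = j) then f η else 0 := by
    rw [Finset.sum_filter]
    refine Finset.sum_congr rfl fun δ _ => ?_
    rw [SimpleGraph.neighborFinset_eq_filter, Finset.filter_filter, Finset.sum_filter]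
    by_cases h : G.dist α δ = i
    · simp [h]
    · simp [h]
  have rhs_eq : (∑ η ∈ univ.filter fun x => G.dist α x = j,
        (((G.neighborFinset η).filter fun δ => G.dist α δ = i).card : ℝ) * f η)
      = ∑ η : V, ∑ δ : V,
          if G.dist α η = j ∧ (G.Adj η δ ∧ G.dist α δ = i) then f η else 0 := by
    rw [Finset.sum_filter]
    refine Finset.sum_congr rfl fun η _ => ?_
    have hcard : (((G.neighborFinset η).filter fun δ => G.dist α δ = i).card : ℝ) * f η
        = ∑ δ : V, if G.Adj η δ ∧ G.dist α δ = i then f η else 0 := by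
      rw [← Finset.sum_filter, Finset.sum_const, nsmul_eq_mul]
      congr 2
      rw [SimpleGraph.neighborFinset_eq_filter, Finset.filter_filter]
    by_cases h : G.dist α η = j
    · simp only [h, if_true, true_and]
      rw [hcard]
    · simp [h]
  rw [lhs_eq, rhs_eq, Finset.sum_comm]
  refine Finset.sum_congr rfl fun η _ => Finset.sum_congr rfl fun δ _ => ?_
  have h3' : G.Adj η δ ↔ G.Adj δ η := G.adj_comm η δ
  by_cases h1 : G.dist α δ = i <;> by_cases h2 : G.dist α η = j <;>
    by_cases h3 : G.Adj δ η <;> simp [h1, h2, h3, h3']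

include hd hi in
private lemma sphere_rel (α : V) (i : ℕ) :
    ((univ.filter fun x => G.dist α x = i).card : ℝ) * b i
      = ((univ.filter fun x => G.dist α x = i + 1).card : ℝ) * c (i + 1) := by
  have h := fubini (G := G) α i (i + 1) (fun _ => (1 : ℝ))
  simp only [Finset.sum_const, nsmul_eq_mul, mul_one] at h
  have hbi : ∀ δ ∈ univ.filter (fun x => G.dist α x = i),
      (((G.neighborFinset δ).filter fun η => G.dist α η = i + 1).card : ℝ) = b i := by
    intro δ hδ
    rw [Finset.mem_filter] at hδ
    have hcb := count_b hd hi α δ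
    rw [hδ.2] at hcb
    exact_mod_cast congrArg Nat.cast hcb
  have hci : ∀ η ∈ univ.filter (fun x => G.dist α x = i + 1),
      (((G.neighborFinset η).filter fun δ => G.dist α δ = i).card : ℝ) = c (i + 1) := by
    intro η hη
    rw [Finset.mem_filter] at hη
    have hcc := count_c hd hi α η
    rw [hη.2] at hcc
    simp only [Nat.add_sub_cancel] at hcc
    exact_mod_cast congrArg Nat.cast hcc
  rw [Finset.sum_congr rfl hbi, Finset.sum_congr rfl hci, Finset.sum_const, Finset.sum_const,
    nsmul_eq_mul, nsmul_eq_mul] at h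
  exact h

include hc in
private lemma neighbor_sum_split (α δ : V) (h1 : 1 ≤ G.dist α δ) (f : V → ℝ) :
    ∑ η ∈ G.neighborFinset δ, f η
      = (∑ η ∈ (G.neighborFinset δ).filter (fun η => G.dist α η = G.dist α δ - 1), f η)
      + (∑ η ∈ (G.neighborFinset δ).filter (fun η => G.dist α η = G.dist α δ), f η)
      + (∑ η ∈ (G.neighborFinset δ).filter (fun η => G.dist α η = G.dist α δ + 1), f η) := by
  set i := G.dist α δ with hidef
  have hsplit : G.neighborFinset δ =
      ((G.neighborFinset δ).filter fun η => G.dist α η = i - 1) ∪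
      (((G.neighborFinset δ).filter fun η => G.dist α η = i) ∪
       ((G.neighborFinset δ).filter fun η => G.dist α η = i + 1)) := by
    ext η
    simp only [Finset.mem_union, Finset.mem_filter, SimpleGraph.mem_neighborFinset]
    constructor
    · intro h
      have ha := dist_adj_le hc α h
      have hb := dist_adj_le hc α h.symm
      refine (by omega : G.dist α η = i - 1 ∨ G.dist α η = i ∨ G.dist α η = i + 1).imp
        (fun hx => ⟨h, hx⟩) (fun hx => hx.imp (fun hy => ⟨h, hy⟩) (fun hy => ⟨h, hy⟩))
    · rintro (⟨h, _⟩ | ⟨h, _⟩ | ⟨h, _⟩) <;> exact h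
  have hd1 : Disjoint ((G.neighborFinset δ).filter fun η => G.dist α η = i - 1)
      (((G.neighborFinset δ).filter fun η => G.dist α η = i) ∪
       ((G.neighborFinset δ).filter fun η => G.dist α η = i + 1)) := by
    simp only [Finset.disjoint_union_right, Finset.disjoint_filter]
    exact ⟨fun x _ hx => by omega, fun x _ hx => by omega⟩
  have hd2 : Disjoint ((G.neighborFinset δ).filter fun η => G.dist α η = i)
      ((G.neighborFinset δ).filter fun η => G.dist α η = i + 1) := by
    simp only [Finset.disjoint_filter]
    exact fun x _ hx => by omega
  conv_lhs => rw [hsplit]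
  rw [Finset.sum_union hd1, Finset.sum_union hd2]
  ring
include hc hd hi hreg in
private lemma key (Lp : Matrix V V ℝ) (hLp : IsMoorePenrose (G.lapMatrix ℝ) Lp)
    (hproj : ∀ (x : V → ℝ) (γ : V),
      ((G.lapMatrix ℝ * Lp) *ᵥ x) γ = x γ - (∑ δ, x δ) / (Fintype.card V : ℝ))
    (α β : V) (hadj : G.Adj α β) :
    (k : ℝ) * (Lp α α - Lp β α) = 1 - 1 / (Fintype.card V : ℝ) := by
  obtain ⟨p1, p2, p3, p4⟩ := hLp
  have hNpos : 0 < Fintype.card V := Fintype.card_pos_iff.mpr ⟨α⟩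
  have hN0 : (Fintype.card V : ℝ) ≠ 0 := Nat.cast_ne_zero.mpr hNpos.ne'
  have hk0 : 0 < k := by
    have : β ∈ G.neighborFinset α := (SimpleGraph.mem_neighborFinset G α β).mpr hadj
    have hpos := Finset.card_pos.mpr ⟨β, this⟩
    rwa [SimpleGraph.card_neighborFinset_eq_degree, hreg α] at hpos
  -- the column vector u = Lp · e_α
  set e : V → ℝ := fun γ => if γ = α then 1 else 0 with he
  set u : V → ℝ := fun γ => Lp γ α with hu
  have hue : Lp *ᵥ e = u := by
    funext γ
    simp [he, hu, Matrix.mulVec, dotProduct, mul_ite, mul_one, mul_zero]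
  have hsume : ∑ δ, e δ = 1 := by simp [he]
  have hLu : ∀ γ, (G.lapMatrix ℝ *ᵥ u) γ = e γ - 1 / (Fintype.card V : ℝ) := by
    intro γ
    have h0 := hproj e γ
    rw [← Matrix.mulVec_mulVec, hue, hsume] at h0
    exact h0
  -- spheres
  set S : ℕ → Finset V := fun j => univ.filter (fun x => G.dist α x = j) with hS
  set T : ℕ → ℝ := fun j => ∑ δ ∈ S j, u δ with hT
  set g : ℕ → ℝ := fun j => T j / ((S j).card : ℝ) with hg
  set w : V → ℝ := fun γ => g (G.dist α γ) with hw
  have hng : ∀ j, ((S j).card : ℝ) * g j = T j := by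
    intro j
    by_cases hj : (S j).card = 0
    · have hTj : T j = 0 := by
        show (∑ δ ∈ S j, u δ) = 0
        rw [Finset.card_eq_zero.mp hj]
        simp
      have hgj : g j = 0 := by
        show T j / ((S j).card : ℝ) = 0
        rw [hTj, zero_div]
      rw [hgj, hTj, mul_zero]
    · show ((S j).card : ℝ) * (T j / ((S j).card : ℝ)) = T j
      field_simp
  have hS0 : S 0 = {α} := by
    ext x
    simp only [hS, Finset.mem_filter, Finset.mem_univ, true_and, Finset.mem_singleton]
    rw [hc.dist_eq_zero_iff]
    exact eq_comm
  have hS1 : S 1 = G.neighborFinset α := by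
    ext x
    simp only [hS, Finset.mem_filter, Finset.mem_univ, true_and,
      SimpleGraph.mem_neighborFinset]
    exact SimpleGraph.dist_eq_one_iff_adj
  have hg0 : g 0 = u α := by
    have hT0 : T 0 = u α := by
      show (∑ δ ∈ S 0, u δ) = u α
      rw [hS0, Finset.sum_singleton]
    show T 0 / ((S 0).card : ℝ) = u α
    rw [hT0, hS0, Finset.card_singleton, Nat.cast_one, div_one]
  have hn1 : (S 1).card = k := by
    rw [hS1, SimpleGraph.card_neighborFinset_eq_degree, hreg α]
  -- the Laplacian applied to the radialization w agrees with that applied to u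
  have hLw : ∀ γ, (G.lapMatrix ℝ *ᵥ w) γ = e γ - 1 / (Fintype.card V : ℝ) := by
    intro γ
    rw [SimpleGraph.lapMatrix_mulVec_apply, hreg γ]
    by_cases hγ : γ = α
    · rw [hγ]
      have hwγ : w α = u α := by
        show g (G.dist α α) = u α
        rw [SimpleGraph.dist_self]
        exact hg0
      have hnb : ∀ η ∈ G.neighborFinset α, w η = g 1 := by
        intro η hη
        show g (G.dist α η) = g 1
        rw [SimpleGraph.dist_eq_one_iff_adj.mpr ((SimpleGraph.mem_neighborFinset G α η).mp hη)]
      rw [Finset.sum_congr rfl hnb, Finset.sum_const,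
        SimpleGraph.card_neighborFinset_eq_degree, hreg α, nsmul_eq_mul]
      have hkg1 : (k : ℝ) * g 1 = T 1 := by
        have := hng 1
        rwa [hn1] at this
      have hLuγ := hLu α
      rw [SimpleGraph.lapMatrix_mulVec_apply, hreg α] at hLuγ
      have hTN : T 1 = ∑ η ∈ G.neighborFinset α, u η := by
        show (∑ δ ∈ S 1, u δ) = _
        rw [hS1]
      rw [← hTN] at hLuγ
      rw [hwγ, hkg1]
      exact hLuγ
    · -- γ ≠ α : distance i ≥ 1
      have hne : α ≠ γ := fun h => hγ h.symm
      have hi1 : 1 ≤ G.dist α γ := hc.pos_dist_of_ne hne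
      have heγ : e γ = 0 := by simp [he, hγ]
      set i := G.dist α γ with hidef
      have hmemγ : γ ∈ S i := by
        simp only [hS, Finset.mem_filter, Finset.mem_univ, true_and]
        exact hidef.symm
      have hni : 0 < (S i).card := Finset.card_pos.mpr ⟨γ, hmemγ⟩
      have hni' : ((S i).card : ℝ) ≠ 0 := Nat.cast_ne_zero.mpr hni.ne'
      set m : ℝ := (k : ℝ) - b i - c i with hm
      have hmγ : (((G.neighborFinset γ).filter fun η => G.dist α η = i).card : ℝ) = m := by
        have := count_mid hc hd hi hreg α γ hi1
        rw [← hidef] at this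
        rw [hm]; linarith
      -- sum of w over neighbors of γ
      have hsumw : ∑ η ∈ G.neighborFinset γ, w η
          = (c i : ℝ) * g (i - 1) + m * g i + (b i : ℝ) * g (i + 1) := by
        have h0 := sum_radial hc hd hi α γ hi1 g
        rw [← hidef] at h0
        show (∑ η ∈ G.neighborFinset γ, g (G.dist α η)) = _
        rw [h0, hmγ]
      rw [hsumw, heγ]
      have hwγ : w γ = g i := rfl
      rw [hwγ]
      -- it suffices to prove the identity multiplied by the sphere size
      have hmain : ((S i).card : ℝ) *
          ((k : ℝ) * g i - ((c i : ℝ) * g (i - 1) + m * g i + (b i : ℝ) * g (i + 1)))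
          = ((S i).card : ℝ) * (0 - 1 / (Fintype.card V : ℝ)) := by
        -- left side in terms of T
        have hB : ((S i).card : ℝ) * c i = ((S (i-1)).card : ℝ) * b (i-1) := by
          have h0 := sphere_rel hd hi α (i - 1)
          have hii : i - 1 + 1 = i := by omega
          rw [hii] at h0
          simp only [hS]
          linarith [h0]
        have hC : ((S i).card : ℝ) * b i = ((S (i+1)).card : ℝ) * c (i+1) :=
          sphere_rel hd hi α i
        have hLHS : ((S i).card : ℝ) *
            ((k : ℝ) * g i - ((c i : ℝ) * g (i - 1) + m * g i + (b i : ℝ) * g (i + 1)))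
            = (k : ℝ) * T i - ((b (i-1) : ℝ) * T (i-1) + m * T i + (c (i+1) : ℝ) * T (i+1)) := by
          have e1 : ((S i).card : ℝ) *
              ((k : ℝ) * g i - ((c i : ℝ) * g (i - 1) + m * g i + (b i : ℝ) * g (i + 1)))
              = (k : ℝ) * (((S i).card : ℝ) * g i)
                - ((((S i).card : ℝ) * c i) * g (i - 1)
                  + m * (((S i).card : ℝ) * g i)
                  + (((S i).card : ℝ) * b i) * g (i + 1)) := by ring
          rw [e1, hB, hC, hng i]
          have e2 : (((S (i-1)).card : ℝ) * b (i-1)) * g (i-1)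
              = (b (i-1) : ℝ) * (((S (i-1)).card : ℝ) * g (i-1)) := by ring
          have e3 : (((S (i+1)).card : ℝ) * c (i+1)) * g (i+1)
              = (c (i+1) : ℝ) * (((S (i+1)).card : ℝ) * g (i+1)) := by ring
          rw [e2, e3, hng (i-1), hng (i+1)]
        -- right side: sum of (L u) over the sphere
        have hRHS : ∑ δ ∈ S i, (G.lapMatrix ℝ *ᵥ u) δ
            = ((S i).card : ℝ) * (0 - 1 / (Fintype.card V : ℝ)) := by
          have : ∀ δ ∈ S i, (G.lapMatrix ℝ *ᵥ u) δ = 0 - 1 / (Fintype.card V : ℝ) := by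
            intro δ hδ
            have hδα : δ ≠ α := by
              intro hh
              simp only [hS, Finset.mem_filter] at hδ
              rw [hh, SimpleGraph.dist_self] at hδ
              omega
            rw [hLu δ, he]
            simp [hδα]
          rw [Finset.sum_congr rfl this, Finset.sum_const, nsmul_eq_mul]
        -- expand the sum of (L u) over the sphere combinatorially
        have hexp : ∑ δ ∈ S i, (G.lapMatrix ℝ *ᵥ u) δ
            = (k : ℝ) * T i - ((b (i-1) : ℝ) * T (i-1) + m * T i + (c (i+1) : ℝ) * T (i+1)) := by
          have step1 : ∑ δ ∈ S i, (G.lapMatrix ℝ *ᵥ u) δ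
              = (k : ℝ) * T i - ∑ δ ∈ S i, ∑ η ∈ G.neighborFinset δ, u η := by
            rw [Finset.sum_congr rfl (fun δ _ => by
              rw [SimpleGraph.lapMatrix_mulVec_apply, hreg δ]), Finset.sum_sub_distrib,
              ← Finset.mul_sum]
          have step2 : ∑ δ ∈ S i, ∑ η ∈ G.neighborFinset δ, u η
              = (∑ δ ∈ S i, ∑ η ∈ (G.neighborFinset δ).filter (fun η => G.dist α η = i - 1), u η)
              + (∑ δ ∈ S i, ∑ η ∈ (G.neighborFinset δ).filter (fun η => G.dist α η = i), u η)
              + (∑ δ ∈ S i, ∑ η ∈ (G.neighborFinset δ).filter (fun η => G.dist α η = i + 1), u η) := by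
            rw [← Finset.sum_add_distrib, ← Finset.sum_add_distrib]
            refine Finset.sum_congr rfl fun δ hδ => ?_
            have hδd : G.dist α δ = i := by
              simp only [hS, Finset.mem_filter] at hδ
              exact hδ.2
            have := neighbor_sum_split hc (δ := δ) α (by omega) u
            rw [hδd] at this
            exact this
          have hf1 : ∑ δ ∈ S i, ∑ η ∈ (G.neighborFinset δ).filter (fun η => G.dist α η = i - 1), u η
              = (b (i-1) : ℝ) * T (i-1) := by
            have h0 := fubini (G := G) α i (i-1) u
            simp only [hS, hT]
            rw [h0, Finset.mul_sum]
            refine Finset.sum_congr rfl fun η hη => ?_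
            have hηd : G.dist α η = i - 1 := by simpa using hη
            have hcb := count_b hd hi α η
            rw [hηd] at hcb
            have : i - 1 + 1 = i := by omega
            rw [this] at hcb
            rw [hcb]
          have hf2 : ∑ δ ∈ S i, ∑ η ∈ (G.neighborFinset δ).filter (fun η => G.dist α η = i), u η
              = m * T i := by
            have h0 := fubini (G := G) α i i u
            simp only [hS, hT]
            rw [h0, Finset.mul_sum]
            refine Finset.sum_congr rfl fun η hη => ?_
            have hηd : G.dist α η = i := by simpa using hη
            have hcm := count_mid hc hd hi hreg α η (by omega)
            rw [hηd] at hcm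
            have : (((G.neighborFinset η).filter fun δ => G.dist α δ = i).card : ℝ) = m := by
              rw [hm]; linarith
            rw [this]
          have hf3 : ∑ δ ∈ S i, ∑ η ∈ (G.neighborFinset δ).filter (fun η => G.dist α η = i + 1), u η
              = (c (i+1) : ℝ) * T (i+1) := by
            have h0 := fubini (G := G) α i (i+1) u
            simp only [hS, hT]
            rw [h0, Finset.mul_sum]
            refine Finset.sum_congr rfl fun η hη => ?_
            have hηd : G.dist α η = i + 1 := by simpa using hη
            have hcc := count_c hd hi α η
            rw [hηd] at hcc
            simp only [Nat.add_sub_cancel] at hcc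
            rw [hcc]
          rw [step1, step2, hf1, hf2, hf3]
        rw [hLHS, ← hexp, hRHS]
      have := mul_left_cancel₀ hni' hmain
      linarith [this]
  -- w - u is constant, with zero sum, hence w = u
  have hwu : ∀ γ, w γ = u γ := by
    have hconst : ∀ γ δ : V, (w - u) γ = (w - u) δ := by
      have h0 : Matrix.toLin' (G.lapMatrix ℝ) (w - u) = 0 := by
        rw [Matrix.toLin'_apply]
        funext γ
        rw [Matrix.mulVec_sub]
        simp only [Pi.sub_apply, Pi.zero_apply, hLw γ, hLu γ, sub_self]
      have := (G.lapMatrix_mulVec_eq_zero_iff_forall_reachable (x := w - u)).mp (by rwa [Matrix.toLin'_apply] at h0)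
      exact fun γ δ => this γ δ (hc γ δ)
    have hsw : ∑ γ, w γ = ∑ γ, u γ := by
      have hmaps : ∀ x ∈ (univ : Finset V), G.dist α x ∈ Finset.range (d + 1) := by
        intro x _
        rw [Finset.mem_range]
        exact Nat.lt_succ_of_le (hd α x)
      rw [← Finset.sum_fiberwise_of_maps_to hmaps w, ← Finset.sum_fiberwise_of_maps_to hmaps u]
      refine Finset.sum_congr rfl fun j _ => ?_
      have h1 : ∑ x ∈ univ.filter (fun x => G.dist α x = j), w x = T j := by
        rw [← hng j]
        have hco : ∀ x ∈ univ.filter (fun x => G.dist α x = j), w x = g j := by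
          intro x hx
          show g (G.dist α x) = g j
          rw [Finset.mem_filter] at hx
          rw [hx.2]
        rw [Finset.sum_congr rfl hco, Finset.sum_const, nsmul_eq_mul]
      rw [h1]
    intro γ
    have hsum0 : ∑ δ : V, (w - u) δ = 0 := by
      simp only [Pi.sub_apply, Finset.sum_sub_distrib, hsw, sub_self]
    have hcard : ((Fintype.card V : ℝ)) * (w - u) γ = ∑ δ : V, (w - u) δ := by
      rw [Finset.sum_congr rfl fun δ _ => hconst δ γ, Finset.sum_const, nsmul_eq_mul,
        Finset.card_univ]
    rw [hsum0] at hcard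
    have hz : (w - u) γ = 0 := by
      rcases mul_eq_zero.mp hcard with h | h
      · exact absurd h hN0
      · exact h
    have := hz
    rw [Pi.sub_apply, sub_eq_zero] at this
    exact this
  -- conclude
  have hLuα := hLu α
  rw [SimpleGraph.lapMatrix_mulVec_apply, hreg α] at hLuα
  have hβ : u β = g 1 := by
    rw [← hwu β]
    show g (G.dist α β) = g 1
    rw [SimpleGraph.dist_eq_one_iff_adj.mpr hadj]
  have hnbu : ∀ η ∈ G.neighborFinset α, u η = g 1 := by
    intro η hη
    rw [← hwu η]
    show g (G.dist α η) = g 1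
    rw [SimpleGraph.dist_eq_one_iff_adj.mpr ((SimpleGraph.mem_neighborFinset G α η).mp hη)]
  rw [Finset.sum_congr rfl hnbu, Finset.sum_const, SimpleGraph.card_neighborFinset_eq_degree,
    hreg α, nsmul_eq_mul] at hLuα
  have heα : e α = 1 := by simp [he]
  rw [heα] at hLuα
  have egoal : (k : ℝ) * (Lp α α - Lp β α) = (k : ℝ) * u α - (k : ℝ) * g 1 := by
    have e1 : Lp α α = u α := rfl
    have e2 : Lp β α = u β := rfl
    rw [e1, e2, hβ]
    ring
  rw [egoal]
  linarith [hLuα]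

include hc in
private lemma proj_lemma (Lp : Matrix V V ℝ) (hLp : IsMoorePenrose (G.lapMatrix ℝ) Lp) :
    ∀ (x : V → ℝ) (γ : V),
      ((G.lapMatrix ℝ * Lp) *ᵥ x) γ = x γ - (∑ δ, x δ) / (Fintype.card V : ℝ) := by
  obtain ⟨p1, p2, p3, p4⟩ := hLp
  have hLsym : (G.lapMatrix ℝ)ᵀ = G.lapMatrix ℝ := (G.isSymm_lapMatrix (R := ℝ)).eq
  have hLLp : G.lapMatrix ℝ * (G.lapMatrix ℝ * Lp) = G.lapMatrix ℝ := by
    calc G.lapMatrix ℝ * (G.lapMatrix ℝ * Lp)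
        = G.lapMatrix ℝ * (G.lapMatrix ℝ * Lp)ᵀ := by rw [p3]
      _ = (G.lapMatrix ℝ * Lp * (G.lapMatrix ℝ)ᵀ)ᵀ := by
          simp only [Matrix.transpose_mul, Matrix.transpose_transpose, Matrix.mul_assoc]
      _ = (G.lapMatrix ℝ * Lp * G.lapMatrix ℝ)ᵀ := by rw [hLsym]
      _ = (G.lapMatrix ℝ)ᵀ := by rw [p1]
      _ = G.lapMatrix ℝ := hLsym
  have hentry : ∀ γ δ : V, G.lapMatrix ℝ γ δ = G.lapMatrix ℝ δ γ := by
    intro γ δ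
    conv_lhs => rw [← hLsym]
    rfl
  have hcolsum : ∀ δ : V, ∑ γ : V, G.lapMatrix ℝ γ δ = 0 := by
    intro δ
    have h0 := congrFun (G.lapMatrix_mulVec_const_eq_zero (R := ℝ)) δ
    simp only [Matrix.mulVec, dotProduct, mul_one, Pi.zero_apply] at h0
    rw [Finset.sum_congr rfl fun γ _ => hentry γ δ]
    exact h0
  have hsumLz : ∀ z : V → ℝ, ∑ γ : V, (G.lapMatrix ℝ *ᵥ z) γ = 0 := by
    intro z
    simp only [Matrix.mulVec, dotProduct]
    rw [Finset.sum_comm]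
    refine Finset.sum_eq_zero fun δ _ => ?_
    rw [← Finset.sum_mul, hcolsum δ, zero_mul]
  intro x γ
  have hNpos : 0 < Fintype.card V := Fintype.card_pos_iff.mpr ⟨γ⟩
  have hN0 : (Fintype.card V : ℝ) ≠ 0 := Nat.cast_ne_zero.mpr hNpos.ne'
  set y : V → ℝ := (G.lapMatrix ℝ * Lp) *ᵥ x - x with hy
  have hy0 : G.lapMatrix ℝ *ᵥ y = 0 := by
    rw [hy, Matrix.mulVec_sub, Matrix.mulVec_mulVec, hLLp, sub_self]
  have hconst : ∀ a bb : V, y a = y bb := by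
    have h0 : Matrix.toLin' (G.lapMatrix ℝ) y = 0 := by
      rw [Matrix.toLin'_apply]
      exact hy0
    have := (G.lapMatrix_mulVec_eq_zero_iff_forall_reachable (x := y)).mp (by rwa [Matrix.toLin'_apply] at h0)
    exact fun a bb => this a bb (hc a bb)
  have hsumy : ∑ δ : V, y δ = - ∑ δ : V, x δ := by
    have h1 : ∑ δ : V, ((G.lapMatrix ℝ * Lp) *ᵥ x) δ = 0 := by
      have e0 : (G.lapMatrix ℝ * Lp) *ᵥ x = G.lapMatrix ℝ *ᵥ (Lp *ᵥ x) := by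
        rw [Matrix.mulVec_mulVec]
      rw [e0]
      exact hsumLz (Lp *ᵥ x)
    simp only [hy, Pi.sub_apply, Finset.sum_sub_distrib, h1, zero_sub]
  have hNy : (Fintype.card V : ℝ) * y γ = ∑ δ : V, y δ := by
    rw [Finset.sum_congr rfl fun δ _ => hconst δ γ, Finset.sum_const, nsmul_eq_mul,
      Finset.card_univ]
  have hyγ : y γ = - ((∑ δ : V, x δ) / (Fintype.card V : ℝ)) := by
    rw [hsumy] at hNy
    field_simp
    linear_combination hNy
  have hyapp : y γ = ((G.lapMatrix ℝ * Lp) *ᵥ x) γ - x γ := rfl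
  rw [hyapp] at hyγ
  linarith [hyγ]

end Aux

/-- In a connected `k`-regular distance-regular graph on `N` vertices with unit resistors,
the effective resistance between adjacent vertices equals `2(N-1)/(N k)`. -/
theorem adjacent_effective_resistance {V : Type*} [Fintype V] [DecidableEq V]
    (G : SimpleGraph V) [DecidableRel G.Adj] (d k : ℕ) (b c : ℕ → ℕ)
    (hdr : IsDistanceRegular G d b c) (hreg : G.IsRegularOfDegree k)
    (Lp : Matrix V V ℝ) (hLp : IsMoorePenrose (G.lapMatrix ℝ) Lp)
    (α β : V) (hadj : G.Adj α β) :
    effRes Lp α β = 2 * ((Fintype.card V : ℝ) - 1) / ((Fintype.card V : ℝ) * k) := by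
  obtain ⟨hc, hd, hi⟩ := hdr
  have hLsym : (G.lapMatrix ℝ)ᵀ = G.lapMatrix ℝ := (G.isSymm_lapMatrix (R := ℝ)).eq
  have hLpsym : Lpᵀ = Lp := MP_symm hLsym hLp
  have hproj := proj_lemma hc Lp hLp
  have hk1 := key hc hd hi hreg Lp hLp hproj α β hadj
  have hk2 := key hc hd hi hreg Lp hLp hproj β α hadj.symm
  have hsym : Lp β α = Lp α β := by
    have h1 : Lpᵀ β α = Lp β α := congrFun (congrFun hLpsym β) α
    have h2 : Lpᵀ β α = Lp α β := rfl
    rw [← h1, h2]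
  have hNpos : 0 < Fintype.card V := Fintype.card_pos_iff.mpr ⟨α⟩
  have hN0 : (Fintype.card V : ℝ) ≠ 0 := Nat.cast_ne_zero.mpr hNpos.ne'
  have hk0 : 0 < k := by
    have hm : β ∈ G.neighborFinset α := (SimpleGraph.mem_neighborFinset G α β).mpr hadj
    have hpos := Finset.card_pos.mpr ⟨β, hm⟩
    rwa [SimpleGraph.card_neighborFinset_eq_degree, hreg α] at hpos
  have hkR : (k : ℝ) * effRes Lp α β = 2 - 2 / (Fintype.card V : ℝ) := by
    rw [effRes]
    rw [hsym] at hk1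
    have hsplit : (k : ℝ) * (Lp α α + Lp β β - 2 * Lp α β)
        = (k : ℝ) * (Lp α α - Lp α β) + (k : ℝ) * (Lp β β - Lp α β) := by ring
    rw [hsplit, hk1, hk2]
    ring
  have hk0' : (k : ℝ) ≠ 0 := Nat.cast_ne_zero.mpr hk0.ne'
  have hNk : (Fintype.card V : ℝ) * k ≠ 0 := mul_ne_zero hN0 hk0'
  rw [eq_div_iff hNk]
  calc effRes Lp α β * ((Fintype.card V : ℝ) * k)
      = ((k : ℝ) * effRes Lp α β) * (Fintype.card V : ℝ) := by ring
    _ = (2 - 2 / (Fintype.card V : ℝ)) * (Fintype.card V : ℝ) := by rw [hkR]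
    _ = 2 * ((Fintype.card V : ℝ) - 1) := by field_simp
end

section
/- Let Γ be a distance-regular graph on N vertices with diameter d, valencies κ_0, …, κ_d and intersection numbers b_i. For 1 ≤ m ≤ d−1, the difference of effective resistances between strata m+1 and m satisfies R_{m+1} − R_m = (2/(N κ_m b_m)) (N − Σ_{l=0}^{m} κ_l), where R_m denotes the effective resistance between any two vertices at graph distance m. -/
open Matrix Finset

/-!
Right multiplication by the Laplacian `L` preserves the matrices whose entries depend only on the
distance between the indices, because the intersection numbers `p^i_{1j}` are well defined. It is
injective on those with zero row sums, hence onto them, so the pseudoinverse `Lp`, which satisfies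
`Lp * L = 1 - J / N` and `Lp * J = 0` (`J = of 1`), is such a matrix. Writing `Lp_i` for its entries
at distance `i`, this gives `R_{m+1} - R_m = 2 (Lp_m - Lp_{m+1})`.
Summing `(Lp * L) α γ = δ_{αγ} - 1 / N` over the ball of radius `m` about `α`, the edges inside
the ball cancel and each of the `κ_m b_m` edges leaving it contributes `Lp_m - Lp_{m+1}`, so
`κ_m b_m (Lp_m - Lp_{m+1}) = 1 - (κ_0 + ⋯ + κ_m) / N`.
-/

namespace Finset

variable {ι ι' N M : Type*} [AddCommMonoid M]

theorem sum_eq_sum_of_card_eq_of_forall_eq {s : Finset ι} {t : Finset ι'} {f : ι → M}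
    {g : ι' → M} (hst : #s = #t) (hfg : ∀ i ∈ s, ∀ j ∈ t, f i = g j) :
    ∑ i ∈ s, f i = ∑ j ∈ t, g j := by
  obtain rfl | ⟨i₀, hi₀⟩ := s.eq_empty_or_nonempty
  · rw [card_empty, eq_comm, card_eq_zero] at hst
    simp [hst]
  obtain ⟨j₀, hj₀⟩ : t.Nonempty := card_pos.mp (hst ▸ card_pos.mpr ⟨i₀, hi₀⟩)
  rw [sum_eq_card_nsmul fun i hi => hfg i hi j₀ hj₀,
    sum_eq_card_nsmul fun j hj => (hfg i₀ hi₀ j hj).symm.trans (hfg i₀ hi₀ j₀ hj₀), hst]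

theorem sum_eq_sum_of_card_filter_eq [DecidableEq N] {s : Finset ι} {t : Finset ι'}
    {u : ι → N} {v : ι' → N} {f : ι → M} {g : ι' → M}
    (hcard : ∀ n, #{i ∈ s | u i = n} = #{j ∈ t | v j = n})
    (hfg : ∀ i ∈ s, ∀ j ∈ t, u i = v j → f i = g j) :
    ∑ i ∈ s, f i = ∑ j ∈ t, g j := by
  rw [← sum_fiberwise_of_maps_to (t := s.image u ∪ t.image v)
      (fun i hi => mem_union_left _ (mem_image_of_mem u hi)),
    ← sum_fiberwise_of_maps_to (t := s.image u ∪ t.image v)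
      (fun j hj => mem_union_right _ (mem_image_of_mem v hj))]
  refine sum_congr rfl fun n _ => sum_eq_sum_of_card_eq_of_forall_eq (hcard n) ?_
  simp only [mem_filter]
  rintro i ⟨hi, rfl⟩ j ⟨hj, hv⟩
  exact hfg i hi j hj hv.symm

end Finset

namespace SimpleGraph

variable {V : Type*} {G : SimpleGraph V}

section

variable (G) (R : Type*) [Ring R]

/-- For a distance-regular graph this is its Bose–Mesner algebra. -/
def distInvariantMatrices : Submodule R (Matrix V V R) where
  carrier := {M | ∀ α β α' β', G.dist α β = G.dist α' β' → M α β = M α' β'}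
  add_mem' hM hN α β α' β' h := by
    simp only [Matrix.add_apply, hM α β α' β' h, hN α β α' β' h]
  zero_mem' _ _ _ _ _ := rfl
  smul_mem' r M hM α β α' β' h := by
    simp only [Matrix.smul_apply, hM α β α' β' h]

end

section

variable {R : Type*} [Ring R]

theorem of_const_mem_distInvariantMatrices (r : R) :
    of (fun _ _ => r) ∈ G.distInvariantMatrices R :=
  fun _ _ _ _ _ => rfl

theorem one_mem_distInvariantMatrices [DecidableEq V] (hconn : G.Connected) :
    (1 : Matrix V V R) ∈ G.distInvariantMatrices R := by
  intro α β α' β' h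
  have hiff : α = β ↔ α' = β' := by
    rw [← hconn.dist_eq_zero_iff, ← hconn.dist_eq_zero_iff, h]
  simp only [one_apply, hiff]

variable [Fintype V] [DecidableRel G.Adj]

theorem mul_adjMatrix_mem_distInvariantMatrices
    (hcount : ∀ α β α' β', G.dist α β = G.dist α' β' → ∀ j,
      #{δ ∈ G.neighborFinset β | G.dist α δ = j} = #{δ ∈ G.neighborFinset β' | G.dist α' δ = j})
    {M : Matrix V V R} (hM : M ∈ G.distInvariantMatrices R) :
    M * G.adjMatrix R ∈ G.distInvariantMatrices R := by
  intro α β α' β' h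
  simp only [mul_adjMatrix_apply]
  exact sum_eq_sum_of_card_filter_eq (hcount α β α' β' h) fun δ _ δ' _ => hM α δ α' δ'

theorem mul_degMatrix_mem_distInvariantMatrices [DecidableEq V] {k : ℕ}
    (hreg : G.IsRegularOfDegree k) {M : Matrix V V R} (hM : M ∈ G.distInvariantMatrices R) :
    M * G.degMatrix R ∈ G.distInvariantMatrices R := by
  intro α β α' β' h
  simp only [degMatrix, mul_diagonal, hreg.degree_eq, hM α β α' β' h]

end

variable [Fintype V]

theorem card_filter_dist_le (α : V) (m : ℕ) :
    #{γ | G.dist α γ ≤ m} = ∑ l ∈ range (m + 1), #{γ | G.dist α γ = l} := by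
  rw [card_eq_sum_card_fiberwise (f := G.dist α) (t := range (m + 1)) fun γ hγ => by
    simpa [Nat.lt_succ_iff] using hγ]
  refine sum_congr rfl fun l hl => ?_
  rw [filter_filter]
  congr 1
  refine filter_congr fun γ _ => ?_
  simp only [mem_range] at hl
  omega

variable [DecidableRel G.Adj]

theorem ncard_setOf_adj_and_dist_eq (α β : V) (k : ℕ) :
    {γ | G.Adj β γ ∧ G.dist α γ = k}.ncard = #{γ ∈ G.neighborFinset β | G.dist α γ = k} := by
  rw [← Set.ncard_coe_finset]
  congr 1
  ext
  simp

theorem card_filter_neighborFinset_dist_eq_zero {α β : V} {j : ℕ} (hj : j ≠ G.dist α β)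
    (hsucc : j ≠ G.dist α β + 1) (hpred : j + 1 ≠ G.dist α β) :
    #{δ ∈ G.neighborFinset β | G.dist α δ = j} = 0 := by
  refine card_eq_zero.mpr (filter_false_of_mem fun δ hδ hδj => ?_)
  have := ((mem_neighborFinset G β δ).mp hδ).diff_dist_adj (u := α)
  omega

theorem sum_sum_neighborFinset_filter_lt_dist {M : Type*} [AddCommMonoid M] (f : V → V → M)
    (α : V) (m : ℕ) :
    ∑ γ ∈ {γ | G.dist α γ ≤ m}, ∑ δ ∈ G.neighborFinset γ with m < G.dist α δ, f γ δ =
      ∑ γ ∈ {γ | G.dist α γ = m}, ∑ δ ∈ G.neighborFinset γ with G.dist α δ = m + 1, f γ δ := by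
  have hsphere : ({γ | G.dist α γ = m} : Finset V) =
      {γ ∈ ({γ | G.dist α γ ≤ m} : Finset V) | G.dist α γ = m} := by
    rw [filter_filter]
    exact filter_congr fun γ _ => by omega
  rw [hsphere, sum_filter (fun γ => G.dist α γ = m)]
  refine sum_congr rfl fun γ hγ => ?_
  have hout : ∀ δ ∈ G.neighborFinset γ,
      m < G.dist α δ ↔ G.dist α γ = m ∧ G.dist α δ = m + 1 := by
    intro δ hδ
    have := ((mem_neighborFinset G γ δ).mp hδ).diff_dist_adj (u := α)
    have := (mem_filter.mp hγ).2
    omega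
  rw [filter_congr hout]
  by_cases hm : G.dist α γ = m <;> simp [hm]

variable [DecidableEq V]

theorem lapMatrix_mul_of_one {R : Type*} [Ring R] : G.lapMatrix R * of 1 = 0 := by
  ext x y
  simpa [Matrix.mul_apply, mulVec, dotProduct] using
    congrFun (G.lapMatrix_mulVec_const_eq_zero (R := R)) x

theorem of_one_mul_lapMatrix {R : Type*} [CommRing R] : of 1 * G.lapMatrix R = 0 := by
  have h := congrArg transpose (G.lapMatrix_mul_of_one (R := R))
  rwa [transpose_mul, (G.isSymm_lapMatrix (R := R)).eq,
    (by ext; rfl : (of 1 : Matrix V V R)ᵀ = of 1), transpose_zero] at h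

/-- Over a connected graph the kernel of `X ↦ X * L` consists of the matrices with constant
rows, so it meets the matrices with zero row sums trivially. -/
theorem eq_zero_of_mul_lapMatrix_eq_zero (hconn : G.Connected) {X : Matrix V V ℝ}
    (hL : X * G.lapMatrix ℝ = 0) (hJ : X * of 1 = 0) : X = 0 := by
  ext α β
  have : Nonempty V := ⟨α⟩
  have hconst : ∀ γ, X α γ = X α β := by
    have hker : G.lapMatrix ℝ *ᵥ X α = 0 := by
      rw [← vecMul_transpose, (G.isSymm_lapMatrix (R := ℝ)).eq, ← mul_apply_eq_vecMul, hL]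
      rfl
    exact fun γ => G.lapMatrix_mulVec_eq_zero_iff_forall_reachable.mp hker γ β (hconn γ β)
  have hsum : ∑ γ, X α γ = 0 := by
    simpa [Matrix.mul_apply] using congrFun (congrFun hJ α) α
  rw [sum_congr rfl fun γ _ => hconst γ, sum_const, card_univ, nsmul_eq_mul] at hsum
  exact (mul_eq_zero.mp hsum).resolve_left (Nat.cast_ne_zero.mpr Fintype.card_ne_zero)

/-- A discrete divergence theorem: the contributions of the edges inside `B` cancel. -/
theorem sum_lapMatrix_mulVec_apply {R : Type*} [CommRing R] (x : V → R) (B : Finset V) :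
    ∑ γ ∈ B, (G.lapMatrix R *ᵥ x) γ =
      ∑ γ ∈ B, ∑ δ ∈ G.neighborFinset γ with δ ∉ B, (x γ - x δ) := by
  have hinner : ∑ γ ∈ B, ∑ δ ∈ G.neighborFinset γ with δ ∈ B, (x γ - x δ) = 0 := by
    have hfilter : ∀ γ, ({δ ∈ G.neighborFinset γ | δ ∈ B} : Finset V) = {δ ∈ B | G.Adj γ δ} := by
      intro γ
      ext δ
      simp [and_comm]
    simp only [hfilter, sum_sub_distrib, sum_filter, sub_eq_zero]
    rw [sum_comm]
    exact sum_congr rfl fun γ _ => sum_congr rfl fun δ _ => by simp only [G.adj_comm δ γ]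
  have hsplit : ∀ γ, (G.lapMatrix R *ᵥ x) γ =
      ∑ δ ∈ G.neighborFinset γ with δ ∈ B, (x γ - x δ) +
        ∑ δ ∈ G.neighborFinset γ with δ ∉ B, (x γ - x δ) := by
    intro γ
    rw [sum_filter_add_sum_filter_not, sum_sub_distrib, sum_const, card_neighborFinset_eq_degree,
      nsmul_eq_mul, lapMatrix_mulVec_apply]
  rw [sum_congr rfl fun γ _ => hsplit γ, sum_add_distrib, hinner, zero_add]

end SimpleGraph

namespace IsMoorePenrose

variable {V : Type*} [Fintype V] [DecidableEq V] {L Lp : Matrix V V ℝ}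

theorem mul_eq_zero_of_mul_eq_zero (h : IsMoorePenrose L Lp) (hL : Lᵀ = L) {X : Matrix V V ℝ}
    (hX : L * X = 0) : Lp * X = 0 := by
  have hLp : Lp = Lp * Lpᵀ * L := by
    conv_lhs => rw [← h.2.1, mul_assoc, ← h.2.2.1, transpose_mul, hL, ← mul_assoc]
  rw [hLp, mul_assoc, hX, mul_zero]

theorem mul_mul_self (h : IsMoorePenrose L Lp) (hL : Lᵀ = L) : Lp * L * L = L := by
  apply transpose_injective
  rw [transpose_mul, h.2.2.2, hL, ← mul_assoc, h.1]

theorem mul_lapMatrix [Nonempty V] {G : SimpleGraph V} [DecidableRel G.Adj] (hconn : G.Connected)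
    (h : IsMoorePenrose (G.lapMatrix ℝ) Lp) :
    Lp * G.lapMatrix ℝ = 1 - (Fintype.card V : ℝ)⁻¹ • of 1 := by
  have hJJ : (of 1 : Matrix V V ℝ) * of 1 = (Fintype.card V : ℝ) • of 1 := by
    ext
    simp [Matrix.mul_apply]
  rw [← sub_eq_zero]
  apply SimpleGraph.eq_zero_of_mul_lapMatrix_eq_zero hconn
  · rw [sub_mul, h.mul_mul_self (G.isSymm_lapMatrix (R := ℝ)).eq, sub_mul, one_mul, smul_mul,
      SimpleGraph.of_one_mul_lapMatrix, smul_zero, sub_zero, sub_self]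
  · rw [sub_mul, mul_assoc, SimpleGraph.lapMatrix_mul_of_one, mul_zero, zero_sub, sub_mul,
      one_mul, smul_mul, hJJ, smul_smul, inv_mul_cancel₀ (Nat.cast_ne_zero.mpr
        Fintype.card_ne_zero), one_smul, sub_self, neg_zero]

end IsMoorePenrose

namespace IsDistanceRegular

open SimpleGraph

variable {V : Type*} [Fintype V] {G : SimpleGraph V} [DecidableRel G.Adj]
  {d : ℕ} {b c : ℕ → ℕ}

theorem card_filter_neighborFinset_dist_succ (hdr : IsDistanceRegular G d b c) {α β : V}
    {i : ℕ} (h : G.dist α β = i) : #{δ ∈ G.neighborFinset β | G.dist α δ = i + 1} = b i := by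
  rw [← ncard_setOf_adj_and_dist_eq]
  exact (hdr.2.2 i (h ▸ hdr.2.1 α β) α β h).1

theorem card_filter_neighborFinset_dist_of_succ (hdr : IsDistanceRegular G d b c) {α β : V}
    {j : ℕ} (h : G.dist α β = j + 1) : #{δ ∈ G.neighborFinset β | G.dist α δ = j} = c (j + 1) := by
  rw [← ncard_setOf_adj_and_dist_eq]
  exact (hdr.2.2 (j + 1) (h ▸ hdr.2.1 α β) α β h).2

theorem isRegularOfDegree (hdr : IsDistanceRegular G d b c) : G.IsRegularOfDegree (b 0) := by
  intro v
  rw [← hdr.card_filter_neighborFinset_dist_succ (dist_self : G.dist v v = 0), zero_add,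
    filter_true_of_mem fun δ hδ => dist_eq_one_iff_adj.mpr ((mem_neighborFinset G v δ).mp hδ),
    card_neighborFinset_eq_degree]

theorem card_filter_neighborFinset_dist_congr (hdr : IsDistanceRegular G d b c)
    {α β α' β' : V} (h : G.dist α β = G.dist α' β') (j : ℕ) :
    #{δ ∈ G.neighborFinset β | G.dist α δ = j} =
      #{δ ∈ G.neighborFinset β' | G.dist α' δ = j} := by
  have off_diag : ∀ n ≠ G.dist α β, #{δ ∈ G.neighborFinset β | G.dist α δ = n} =
      #{δ ∈ G.neighborFinset β' | G.dist α' δ = n} := by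
    intro n hn
    by_cases hsucc : n = G.dist α β + 1
    · rw [hsucc, hdr.card_filter_neighborFinset_dist_succ rfl, h,
        hdr.card_filter_neighborFinset_dist_succ rfl]
    by_cases hpred : n + 1 = G.dist α β
    · rw [hdr.card_filter_neighborFinset_dist_of_succ hpred.symm,
        hdr.card_filter_neighborFinset_dist_of_succ (h ▸ hpred.symm)]
    rw [card_filter_neighborFinset_dist_eq_zero hn hsucc hpred,
      card_filter_neighborFinset_dist_eq_zero (h ▸ hn) (h ▸ hsucc) (h ▸ hpred)]
  obtain hj | hj := eq_or_ne j (G.dist α β)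
  swap
  · exact off_diag j hj
  have hjd : j ∈ range (d + 1) := mem_range.mpr (Nat.lt_succ_of_le (hj ▸ hdr.2.1 α β))
  -- both counts complete the same off-diagonal counts to the valency `b 0`
  have hvalency : ∀ x y : V, b 0 = #{δ ∈ G.neighborFinset y | G.dist x δ = j} +
      ∑ n ∈ (range (d + 1)).erase j, #{δ ∈ G.neighborFinset y | G.dist x δ = n} := by
    intro x y
    rw [add_sum_erase _ (fun n => #{δ ∈ G.neighborFinset y | G.dist x δ = n}) hjd,
      ← card_eq_sum_card_fiberwise fun δ _ => mem_range.mpr (Nat.lt_succ_of_le (hdr.2.1 x δ)),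
      card_neighborFinset_eq_degree, hdr.isRegularOfDegree]
  have h₁ := hvalency α β
  have h₂ := hvalency α' β'
  rw [sum_congr rfl fun n hn => off_diag n (hj ▸ ne_of_mem_erase hn)] at h₁
  omega

variable [DecidableEq V]

theorem mul_lapMatrix_mem_distInvariantMatrices {R : Type*} [Ring R]
    (hdr : IsDistanceRegular G d b c) {M : Matrix V V R}
    (hM : M ∈ G.distInvariantMatrices R) : M * G.lapMatrix R ∈ G.distInvariantMatrices R := by
  rw [lapMatrix, Matrix.mul_sub]
  exact sub_mem (mul_degMatrix_mem_distInvariantMatrices hdr.isRegularOfDegree hM)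
    (mul_adjMatrix_mem_distInvariantMatrices
      (fun _ _ _ _ h => hdr.card_filter_neighborFinset_dist_congr h) hM)

theorem pinv_mem_distInvariantMatrices [Nonempty V] (hdr : IsDistanceRegular G d b c)
    {Lp : Matrix V V ℝ} (hLp : IsMoorePenrose (G.lapMatrix ℝ) Lp) :
    Lp ∈ G.distInvariantMatrices ℝ := by
  let S := G.distInvariantMatrices ℝ ⊓ LinearMap.ker (LinearMap.mulRight ℝ (of 1))
  have hS : ∀ {M}, M ∈ S ↔ M ∈ G.distInvariantMatrices ℝ ∧ M * of 1 = 0 := by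
    simp [S]
  let f : S →ₗ[ℝ] S := (LinearMap.mulRight ℝ (G.lapMatrix ℝ)).restrict fun M hM =>
    hS.mpr ⟨hdr.mul_lapMatrix_mem_distInvariantMatrices (hS.mp hM).1,
      by rw [LinearMap.mulRight_apply, mul_assoc, lapMatrix_mul_of_one, mul_zero]⟩
  have hf : Function.Injective f := by
    refine (injective_iff_map_eq_zero f).mpr fun ⟨M, hM⟩ hfM => Subtype.ext ?_
    exact eq_zero_of_mul_lapMatrix_eq_zero hdr.1 (congrArg Subtype.val hfM) (hS.mp hM).2
  have hLpL : Lp * G.lapMatrix ℝ ∈ S := by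
    refine hS.mpr ⟨?_, by rw [mul_assoc, lapMatrix_mul_of_one, mul_zero]⟩
    rw [hLp.mul_lapMatrix hdr.1]
    exact sub_mem (one_mem_distInvariantMatrices hdr.1)
      (Submodule.smul_mem _ _ (of_const_mem_distInvariantMatrices 1))
  obtain ⟨⟨M, hM⟩, hfM⟩ := LinearMap.injective_iff_surjective.mp hf ⟨_, hLpL⟩
  have hMLp : Lp = M := by
    refine sub_eq_zero.mp (eq_zero_of_mul_lapMatrix_eq_zero hdr.1 ?_ ?_)
    · rw [sub_mul, sub_eq_zero]
      exact (congrArg Subtype.val hfM).symm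
    · rw [sub_mul, hLp.mul_eq_zero_of_mul_eq_zero (G.isSymm_lapMatrix (R := ℝ)).eq
        lapMatrix_mul_of_one, (hS.mp hM).2, sub_zero]
  exact hMLp ▸ (hS.mp hM).1

theorem card_sphere_mul_mul_pinv_sub (hdr : IsDistanceRegular G d b c) {Lp : Matrix V V ℝ}
    (hLp : IsMoorePenrose (G.lapMatrix ℝ) Lp) {α β β' : V} {m : ℕ} (hβ : G.dist α β = m)
    (hβ' : G.dist α β' = m + 1) :
    #{γ | G.dist α γ = m} * b m * (Lp α β - Lp α β') =
      1 - (#{γ | G.dist α γ ≤ m} : ℝ) / Fintype.card V := by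
  have : Nonempty V := ⟨α⟩
  have hinv := hdr.pinv_mem_distInvariantMatrices hLp
  have hrow : ∀ γ, (G.lapMatrix ℝ *ᵥ Lp α) γ =
      (if α = γ then 1 else 0) - (Fintype.card V : ℝ)⁻¹ := by
    intro γ
    rw [← vecMul_transpose, (G.isSymm_lapMatrix (R := ℝ)).eq, ← mul_apply_eq_vecMul,
      hLp.mul_lapMatrix hdr.1]
    simp [Matrix.one_apply]
  have hdiv := G.sum_lapMatrix_mulVec_apply (Lp α) {γ | G.dist α γ ≤ m}
  simp only [mem_filter, mem_univ, true_and, not_le] at hdiv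
  rw [sum_sum_neighborFinset_filter_lt_dist, sum_congr rfl fun γ _ => hrow γ, sum_sub_distrib,
    sum_const, sum_ite_eq, if_pos (by simp)] at hdiv
  have hedge : ∀ γ ∈ ({γ | G.dist α γ = m} : Finset V),
      ∀ δ ∈ ({δ ∈ G.neighborFinset γ | G.dist α δ = m + 1} : Finset V),
        Lp α γ - Lp α δ = Lp α β - Lp α β' := by
    intro γ hγ δ hδ
    rw [hinv α γ α β (by simpa [hβ] using hγ), hinv α δ α β' (by simp_all)]
  rw [sum_congr rfl fun γ hγ => sum_congr rfl (hedge γ hγ)] at hdiv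
  rw [sum_congr rfl fun γ hγ => by
    rw [sum_const, hdr.card_filter_neighborFinset_dist_succ (mem_filter.mp hγ).2]] at hdiv
  rw [sum_const, smul_smul, nsmul_eq_mul] at hdiv
  rw [div_eq_mul_inv, hdiv, nsmul_eq_mul, Nat.cast_mul]

end IsDistanceRegular

theorem effective_resistance_stratum_difference_general {V : Type*} [Fintype V] [DecidableEq V]
    (G : SimpleGraph V) [DecidableRel G.Adj] (d : ℕ) (b c κ : ℕ → ℕ)
    (hdr : IsDistanceRegular G d b c)
    (hκ : ∀ i, i ≤ d → ∀ α : V, {β : V | G.dist α β = i}.ncard = κ i)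
    (Lp : Matrix V V ℝ) (hLp : IsMoorePenrose (G.lapMatrix ℝ) Lp)
    (m : ℕ)
    (α β β' : V) (hβ : G.dist α β = m) (hβ' : G.dist α β' = m + 1) :
    effRes Lp α β' - effRes Lp α β =
      2 / ((Fintype.card V : ℝ) * κ m * b m) *
        ((Fintype.card V : ℝ) - ∑ l ∈ Finset.range (m + 1), (κ l : ℝ)) := by
  have : Nonempty V := ⟨α⟩
  have hsphere : ∀ l ≤ m, #{γ | G.dist α γ = l} = κ l := fun l hl => by
    rw [← hκ l (hl.trans (hβ ▸ hdr.2.1 α β)) α, ← Set.ncard_coe_finset, coe_filter]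
    simp
  have hball : #{γ | G.dist α γ ≤ m} = ∑ l ∈ range (m + 1), κ l := by
    rw [SimpleGraph.card_filter_dist_le]
    exact sum_congr rfl fun l hl => hsphere l (Nat.lt_succ_iff.mp (mem_range.mp hl))
  have hball_lt : ∑ l ∈ range (m + 1), (κ l : ℝ) < Fintype.card V := by
    exact_mod_cast hball ▸ card_lt_univ_of_notMem (x := β') (by simp [hβ'])
  have hflow := hdr.card_sphere_mul_mul_pinv_sub hLp hβ hβ'
  rw [hsphere m le_rfl, hball] at hflow
  push_cast at hflow
  have hN : (0 : ℝ) < Fintype.card V := hball_lt.trans_le' (by positivity)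
  have hκb : (κ m : ℝ) * b m ≠ 0 := by
    intro h
    rw [h, zero_mul, eq_comm, sub_eq_zero, eq_comm, div_eq_one_iff_eq hN.ne'] at hflow
    exact hball_lt.ne hflow
  have hinv := hdr.pinv_mem_distInvariantMatrices hLp
  have hres : effRes Lp α β' - effRes Lp α β = 2 * (Lp α β - Lp α β') := by
    rw [effRes, effRes, hinv β β α α (by simp), hinv β' β' α α (by simp)]
    ring
  rw [hres, div_mul_eq_mul_div, eq_div_iff (by rw [mul_assoc]; exact mul_ne_zero hN.ne' hκb)]
  field_simp at hflow
  linear_combination 2 * hflow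

/-- In a distance-regular graph on `N` vertices with diameter `d`, valencies `κ_i` and
intersection numbers `b_i`, the effective resistances between strata satisfy, for
`1 ≤ m ≤ d - 1`,
`R_{m+1} - R_m = (2 / (N κ_m b_m)) (N - Σ_{l=0}^m κ_l)`. -/
theorem effective_resistance_stratum_difference {V : Type*} [Fintype V] [DecidableEq V]
    (G : SimpleGraph V) [DecidableRel G.Adj] (d : ℕ) (b c κ : ℕ → ℕ)
    (hdr : IsDistanceRegular G d b c)
    (hκ : ∀ i, i ≤ d → ∀ α : V, {β : V | G.dist α β = i}.ncard = κ i)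
    (Lp : Matrix V V ℝ) (hLp : IsMoorePenrose (G.lapMatrix ℝ) Lp)
    (m : ℕ) (hm1 : 1 ≤ m) (hmd : m ≤ d - 1)
    (α β β' : V) (hβ : G.dist α β = m) (hβ' : G.dist α β' = m + 1) :
    effRes Lp α β' - effRes Lp α β =
      2 / ((Fintype.card V : ℝ) * κ m * b m) *
        ((Fintype.card V : ℝ) - ∑ l ∈ Finset.range (m + 1), (κ l : ℝ)) :=
  effective_resistance_stratum_difference_general G d b c κ hdr hκ Lp hLp m α β β' hβ hβ'
end

section
/- In a distance-regular graph on N ≥ 2 vertices of diameter d, the effective resistance R_m between vertices at graph distance m is a strictly increasing function of m for 1 ≤ m ≤ d. -/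
open Matrix

/-!
Let `L` be the Laplacian and `L⁺` its Moore–Penrose inverse. In a distance-regular graph the
equation `L v = eₓ - 1/N` has a radial solution `v y = f (dist x y)`: at a vertex at distance `i`
it reads `c_i (f i - f (i - 1)) + b_i (f i - f (i + 1)) = -1/N`, which is solved by
`f (i + 1) = f i - (N - ∑_{l ≤ i} κ_l) / (N κ_i b_i)` thanks to `κ_i b_i = κ_{i+1} c_{i+1}`.
The sphere sizes `κ_i` depend only on the intersection numbers, hence so does `f`. Since
`L⁺ eₓ - v` lies in `ker L = ℝ · 1`, the effective resistance is `R(x, y) = -2 f (dist x y)`,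
and `f` strictly decreases as long as some vertex lies beyond distance `i`.
-/

open Finset SimpleGraph

namespace IsMoorePenrose

variable {n : Type*} [Fintype n] [DecidableEq n] {A X Y : Matrix n n ℝ}

theorem transpose (h : IsMoorePenrose A X) : IsMoorePenrose Aᵀ Xᵀ := by
  obtain ⟨h₁, h₂, h₃, h₄⟩ := h
  refine ⟨?_, ?_, ?_, ?_⟩
  · simpa only [transpose_mul, Matrix.mul_assoc] using congrArg Matrix.transpose h₁
  · simpa only [transpose_mul, Matrix.mul_assoc] using congrArg Matrix.transpose h₂
  · rw [← transpose_mul, h₄, h₄]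
  · rw [← transpose_mul, h₃, h₃]

theorem unique (hX : IsMoorePenrose A X) (hY : IsMoorePenrose A Y) : X = Y := by
  obtain ⟨hX₁, hX₂, hX₃, hX₄⟩ := hX
  obtain ⟨hY₁, hY₂, hY₃, hY₄⟩ := hY
  have hAX : A * X = A * Y :=
    calc A * X = (A * X)ᵀ := hX₃.symm
      _ = (A * Y * (A * X))ᵀ := by rw [← Matrix.mul_assoc, hY₁]
      _ = A * X * (A * Y) := by rw [transpose_mul, hX₃, hY₃]
      _ = A * Y := by rw [← Matrix.mul_assoc, hX₁]
  have hXA : X * A = Y * A :=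
    calc X * A = (X * A)ᵀ := hX₄.symm
      _ = (X * A * (Y * A))ᵀ := by rw [Matrix.mul_assoc X, ← Matrix.mul_assoc A, hY₁]
      _ = Y * A * (X * A) := by rw [transpose_mul, hX₄, hY₄]
      _ = Y * A := by rw [Matrix.mul_assoc Y, ← Matrix.mul_assoc A, hX₁]
  calc X = X * A * X := hX₂.symm
    _ = Y * A * Y := by rw [hXA, Matrix.mul_assoc, hAX, ← Matrix.mul_assoc]
    _ = Y := hY₂

theorem isSymm (h : IsMoorePenrose A X) (hA : A.IsSymm) : X.IsSymm := by
  have := h.transpose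
  rw [hA.eq] at this
  exact (unique h this).symm

theorem mulVec_eq_zero (h : IsMoorePenrose A X) {v : n → ℝ} (hv : Aᵀ *ᵥ v = 0) :
    X *ᵥ v = 0 :=
  calc X *ᵥ v = (X * (A * X)ᵀ) *ᵥ v := by rw [h.2.2.1, ← Matrix.mul_assoc, h.2.1]
    _ = X *ᵥ (Xᵀ *ᵥ (Aᵀ *ᵥ v)) := by
      rw [transpose_mul, mulVec_mulVec, mulVec_mulVec, Matrix.mul_assoc]
    _ = 0 := by rw [hv, mulVec_zero, mulVec_zero]

end IsMoorePenrose

namespace SimpleGraph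

variable {V : Type*} {G : SimpleGraph V} {x y : V} {i j : ℕ}

theorem Connected.exists_adj_dist_eq (hG : G.Connected) (h : G.dist x y = i + 1) :
    ∃ z, G.Adj z y ∧ G.dist x z = i := by
  obtain ⟨p, hp⟩ := hG.exists_walk_length_eq_dist y x
  cases p with
  | nil => simp_all
  | @cons _ z _ hyz q =>
    have hq : q.length = i := by
      rw [Walk.length_cons, dist_comm, h] at hp
      omega
    refine ⟨z, hyz.symm, le_antisymm ?_ ?_⟩
    · exact dist_comm (G := G) ▸ hq ▸ dist_le q
    · have := hG.dist_triangle (u := x) (v := z) (w := y)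
      rw [dist_eq_one_iff_adj.mpr hyz.symm] at this
      omega

theorem Connected.exists_dist_eq_of_le (hG : G.Connected) (h : j ≤ G.dist x y) :
    ∃ z, G.dist x z = j := by
  obtain ⟨k, hk⟩ := Nat.exists_eq_add_of_le h
  induction k generalizing y with
  | zero => exact ⟨y, hk⟩
  | succ k ih =>
    obtain ⟨z, -, hz⟩ := hG.exists_adj_dist_eq (i := j + k) hk
    exact ih (by omega) hz

variable [Fintype V] [DecidableEq V] [DecidableRel G.Adj]

theorem Connected.pinv_col_sub_eq_sub (hG : G.Connected) {Lp : Matrix V V ℝ}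
    (hLp : IsMoorePenrose (G.lapMatrix ℝ) Lp) {v : V → ℝ} {x : V} {t : ℝ}
    (hv : G.lapMatrix ℝ *ᵥ v = Pi.single x 1 - t • 1) (y z : V) :
    Lp y x - Lp z x = v y - v z := by
  have hLp₁ : Lp *ᵥ 1 = 0 :=
    hLp.mulVec_eq_zero ((G.isSymm_lapMatrix ℝ).eq ▸ G.lapMatrix_mulVec_const_eq_zero)
  have hcol : (Lp * G.lapMatrix ℝ) *ᵥ v = Lp.col x := by
    rw [← mulVec_mulVec, hv, mulVec_sub, mulVec_smul, hLp₁, smul_zero, sub_zero,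
      mulVec_single_one]
  have hker : G.lapMatrix ℝ *ᵥ (v - (Lp * G.lapMatrix ℝ) *ᵥ v) = 0 := by
    rw [mulVec_sub, mulVec_mulVec, ← Matrix.mul_assoc, hLp.1, sub_self]
  have := (G.lapMatrix_mulVec_eq_zero_iff_forall_reachable).mp hker y z (hG y z)
  simp only [hcol, Pi.sub_apply, col_apply] at this
  linarith

end SimpleGraph

namespace IsDistanceRegular

variable {V : Type*} [Fintype V] {G : SimpleGraph V} {d : ℕ} {b c : ℕ → ℕ} {x y : V}
  {i : ℕ}

noncomputable def valency (b c : ℕ → ℕ) : ℕ → ℝ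
  | 0 => 1
  | i + 1 => valency b c i * b i / c (i + 1)

noncomputable def tail (N : ℕ) (b c : ℕ → ℕ) (i : ℕ) : ℝ :=
  N - ∑ l ∈ range (i + 1), valency b c l

/-- The radial solution `v y = potential N b c (dist x y)` of `L v = eₓ - 1/N`. -/
noncomputable def potential (N : ℕ) (b c : ℕ → ℕ) : ℕ → ℝ
  | 0 => 0
  | i + 1 => potential N b c i - tail N b c i / (N * valency b c i * b i)

theorem valency_succ_mul (hc : c (i + 1) ≠ 0) :
    valency b c (i + 1) * c (i + 1) = valency b c i * b i := by
  rw [valency, div_mul_cancel₀ _ (Nat.cast_ne_zero.mpr hc)]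

theorem tail_zero (N : ℕ) : tail N b c 0 = N - 1 := by
  simp [tail, valency]

theorem tail_succ (N : ℕ) : tail N b c (i + 1) = tail N b c i - valency b c (i + 1) := by
  rw [tail, tail, sum_range_succ]
  ring

theorem card_filter_dist_le (x : V) (i : ℕ) :
    #{y | G.dist x y ≤ i} = ∑ l ∈ range (i + 1), #{y | G.dist x y = l} := by
  rw [card_eq_sum_card_fiberwise (f := G.dist x) (t := range (i + 1))
    fun y hy => mem_range.mpr (Nat.lt_succ_of_le (mem_filter.mp hy).2)]
  refine sum_congr rfl fun l hl => ?_
  rw [filter_filter]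
  exact congrArg card (filter_congr fun y _ => by grind)

variable (hdr : IsDistanceRegular G d b c)
include hdr

theorem card_adj_dist_eq_succ [DecidableRel G.Adj] (h : G.dist x y = i) :
    #{z | G.Adj y z ∧ G.dist x z = i + 1} = b i := by
  rw [← (hdr.2.2 i (h ▸ hdr.2.1 x y) x y h).1, Set.ncard_eq_toFinset_card', Set.toFinset_ofPred]

theorem card_adj_dist_eq_pred [DecidableRel G.Adj] (h : G.dist x y = i) :
    #{z | G.Adj y z ∧ G.dist x z = i - 1} = c i := by
  rw [← (hdr.2.2 i (h ▸ hdr.2.1 x y) x y h).2, Set.ncard_eq_toFinset_card', Set.toFinset_ofPred]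

theorem b_ne_zero (h : G.dist x y = i + 1) : b i ≠ 0 := by
  classical
  obtain ⟨z, hzy, hz⟩ := hdr.1.exists_adj_dist_eq h
  rw [← hdr.card_adj_dist_eq_succ hz]
  exact card_ne_zero_of_mem (mem_filter.mpr ⟨mem_univ y, hzy, h⟩)

theorem c_ne_zero (h : G.dist x y = i + 1) : c (i + 1) ≠ 0 := by
  classical
  obtain ⟨z, hzy, hz⟩ := hdr.1.exists_adj_dist_eq h
  rw [← hdr.card_adj_dist_eq_pred h]
  exact card_ne_zero_of_mem (mem_filter.mpr ⟨mem_univ z, hzy.symm, by omega⟩)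

theorem sum_neighborFinset_comp_dist [DecidableRel G.Adj] (x y : V) {f : ℕ → ℝ}
    (hf : f (G.dist x y) = 0) :
    ∑ z ∈ G.neighborFinset y, f (G.dist x z) =
      c (G.dist x y) * f (G.dist x y - 1) + b (G.dist x y) * f (G.dist x y + 1) := by
  set i := G.dist x y with hi
  have hsplit : ∀ z ∈ G.neighborFinset y, f (G.dist x z) =
      (if G.dist x z = i - 1 then f (i - 1) else 0) +
        (if G.dist x z = i + 1 then f (i + 1) else 0) := by
    intro z hz
    rcases ((G.mem_neighborFinset y z).mp hz).diff_dist_adj (u := x) with h | h | h <;>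
      rw [h] <;> split_ifs <;> grind
  rw [sum_congr rfl hsplit, sum_add_distrib, ← sum_filter, ← sum_filter, sum_const, sum_const,
    neighborFinset_eq_filter, filter_filter, filter_filter, hdr.card_adj_dist_eq_pred hi.symm,
    hdr.card_adj_dist_eq_succ hi.symm, nsmul_eq_mul, nsmul_eq_mul]

theorem lapMatrix_mulVec_comp_dist [DecidableEq V] [DecidableRel G.Adj] (f : ℕ → ℝ)
    (x y : V) :
    (G.lapMatrix ℝ *ᵥ fun z => f (G.dist x z)) y =
      c (G.dist x y) * (f (G.dist x y) - f (G.dist x y - 1)) +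
        b (G.dist x y) * (f (G.dist x y) - f (G.dist x y + 1)) := by
  have := hdr.sum_neighborFinset_comp_dist x y (f := fun k => f (G.dist x y) - f k) (sub_self _)
  beta_reduce at this
  rw [lapMatrix_mulVec_apply, ← this, sum_sub_distrib, sum_const, card_neighborFinset_eq_degree,
    nsmul_eq_mul]

theorem card_sphere_succ_mul (x : V) (i : ℕ) :
    #{y | G.dist x y = i + 1} * c (i + 1) = #{y | G.dist x y = i} * b i := by
  classical
  refine (card_mul_eq_card_mul G.Adj (fun y hy => ?_) fun y hy => ?_).symm
  · rw [bipartiteAbove, filter_filter, ← hdr.card_adj_dist_eq_succ (mem_filter.mp hy).2]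
    simp only [and_comm]
  · rw [bipartiteBelow, filter_filter, ← hdr.card_adj_dist_eq_pred (mem_filter.mp hy).2,
      Nat.add_sub_cancel]
    simp only [and_comm, G.adj_comm]

theorem card_sphere_eq_valency (x : V) :
    ∀ i, (#{y | G.dist x y = i} : ℝ) = valency b c i
  | 0 => by
    rw [valency, Nat.cast_eq_one, card_eq_one]
    exact ⟨x, by ext; simp [hdr.1.dist_eq_zero_iff, eq_comm]⟩
  | i + 1 => by
    by_cases hc : c (i + 1) = 0
    · -- no vertex lies at distance `i + 1`, and `valency b c (i + 1)` divides by `0`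
      have : #{y | G.dist x y = i + 1} = 0 :=
        card_eq_zero.mpr (filter_eq_empty_iff.mpr fun _ _ h => hdr.c_ne_zero h hc)
      simp [valency, hc, this]
    · rw [valency, ← card_sphere_eq_valency x i, eq_div_iff (Nat.cast_ne_zero.mpr hc)]
      exact_mod_cast hdr.card_sphere_succ_mul x i

theorem valency_pos (h : G.dist x y = i) : 0 < valency b c i := by
  rw [← hdr.card_sphere_eq_valency x]
  exact_mod_cast card_pos.mpr ⟨y, mem_filter.mpr ⟨mem_univ y, h⟩⟩

theorem tail_eq_card (x : V) (i : ℕ) :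
    tail (Fintype.card V) b c i = #{y | i < G.dist x y} := by
  have hsplit := card_filter_add_card_filter_not (s := univ) (fun y => G.dist x y ≤ i)
  simp only [not_le, card_univ] at hsplit
  rw [tail, ← hsplit, ← sum_congr rfl fun l _ => hdr.card_sphere_eq_valency x l,
    ← Nat.cast_sum, ← card_filter_dist_le]
  push_cast
  ring

theorem tail_eq_zero [Nonempty V] (hb : b i = 0) : tail (Fintype.card V) b c i = 0 := by
  obtain ⟨x⟩ := ‹Nonempty V›
  rw [hdr.tail_eq_card x, Nat.cast_eq_zero, card_eq_zero, filter_eq_empty_iff]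
  intro y _ hy
  obtain ⟨z, hz⟩ := hdr.1.exists_dist_eq_of_le (Nat.succ_le_of_lt hy)
  exact hdr.b_ne_zero hz hb

theorem tail_pos (h : i < G.dist x y) : 0 < tail (Fintype.card V) b c i := by
  rw [hdr.tail_eq_card x]
  exact_mod_cast card_pos.mpr ⟨y, mem_filter.mpr ⟨mem_univ y, h⟩⟩

-- the current through the `κ_i b_i` edges from distance `i` to distance `i + 1`
theorem valency_mul_mul_potential_sub (h : G.dist x y = i) :
    valency b c i * b i *
        (potential (Fintype.card V) b c i - potential (Fintype.card V) b c (i + 1)) =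
      tail (Fintype.card V) b c i / Fintype.card V := by
  have : Nonempty V := ⟨x⟩
  rcases eq_or_ne (b i) 0 with hb | hb
  · simp [hb, hdr.tail_eq_zero hb]
  · have hκ := (hdr.valency_pos h).ne'
    have hN : (Fintype.card V : ℝ) ≠ 0 := Nat.cast_ne_zero.mpr Fintype.card_ne_zero
    rw [potential]
    field_simp
    ring

theorem lapMatrix_mulVec_potential [DecidableEq V] [DecidableRel G.Adj] (x : V) :
    G.lapMatrix ℝ *ᵥ (fun y => potential (Fintype.card V) b c (G.dist x y)) =
      Pi.single x 1 - (Fintype.card V : ℝ)⁻¹ • 1 := by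
  ext y
  rw [hdr.lapMatrix_mulVec_comp_dist, Pi.sub_apply, Pi.smul_apply, Pi.one_apply, smul_eq_mul,
    mul_one]
  rcases hy : G.dist x y with _ | i
  · obtain rfl : x = y := hdr.1.dist_eq_zero_iff.mp hy
    have h₀ := hdr.valency_mul_mul_potential_sub hy
    have hN : (Fintype.card V : ℝ) ≠ 0 :=
      Nat.cast_ne_zero.mpr (Fintype.card_pos_iff.mpr ⟨x⟩).ne'
    rw [tail_zero, valency, one_mul] at h₀
    rw [Pi.single_eq_same, Nat.zero_sub, sub_self, mul_zero, zero_add, h₀]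
    field_simp
  · obtain ⟨z, -, hz⟩ := hdr.1.exists_adj_dist_eq hy
    have hx : y ≠ x := by rintro rfl; simp at hy
    have h₁ := hdr.valency_mul_mul_potential_sub hz
    have h₂ := hdr.valency_mul_mul_potential_sub hy
    have hκ := valency_succ_mul (b := b) (hdr.c_ne_zero hy)
    rw [tail_succ] at h₂
    rw [Pi.single_eq_of_ne hx, Nat.add_sub_cancel]
    apply mul_left_cancel₀ (hdr.valency_pos hy).ne'
    set f := potential (Fintype.card V) b c
    linear_combination (f (i + 1) - f i) * hκ - h₁ + h₂

theorem effRes_eq_neg_two_mul_potential [DecidableEq V] [DecidableRel G.Adj]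
    {Lp : Matrix V V ℝ} (hLp : IsMoorePenrose (G.lapMatrix ℝ) Lp) (x y : V) :
    effRes Lp x y = -2 * potential (Fintype.card V) b c (G.dist x y) := by
  have hx := hdr.1.pinv_col_sub_eq_sub hLp (hdr.lapMatrix_mulVec_potential x) x y
  have hy := hdr.1.pinv_col_sub_eq_sub hLp (hdr.lapMatrix_mulVec_potential y) y x
  have hsymm := (hLp.isSymm (G.isSymm_lapMatrix ℝ)).apply x y
  simp only [dist_self, dist_comm (u := y), potential] at hx hy
  rw [effRes]
  linarith

theorem potential_succ_lt (h : G.dist x y = i + 1) :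
    potential (Fintype.card V) b c (i + 1) < potential (Fintype.card V) b c i := by
  obtain ⟨z, -, hz⟩ := hdr.1.exists_adj_dist_eq h
  have hN : (0 : ℝ) < Fintype.card V := Nat.cast_pos.mpr (Fintype.card_pos_iff.mpr ⟨x⟩)
  have hb : (0 : ℝ) < b i := Nat.cast_pos.mpr (Nat.pos_of_ne_zero (hdr.b_ne_zero h))
  have hfar : i < G.dist x y := by omega
  rw [potential, sub_lt_self_iff]
  exact div_pos (hdr.tail_pos hfar) (mul_pos (mul_pos hN (hdr.valency_pos hz)) hb)

end IsDistanceRegular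

theorem effective_resistance_strict_mono_general {V : Type*} [Fintype V] [DecidableEq V]
    (G : SimpleGraph V) [DecidableRel G.Adj] (d : ℕ) (b c : ℕ → ℕ)
    (hdr : IsDistanceRegular G d b c)
    (Lp : Matrix V V ℝ) (hLp : IsMoorePenrose (G.lapMatrix ℝ) Lp)
    (m : ℕ)
    (α β β' : V) (hβ : G.dist α β = m) (hβ' : G.dist α β' = m + 1) :
    effRes Lp α β < effRes Lp α β' := by
  rw [hdr.effRes_eq_neg_two_mul_potential hLp, hdr.effRes_eq_neg_two_mul_potential hLp, hβ,
    hβ']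
  linarith [hdr.potential_succ_lt hβ']

/-- In a distance-regular graph on `N ≥ 2` vertices of diameter `d`, the effective
resistance between vertices at graph distance `m` is strictly increasing in `m` for
`1 ≤ m ≤ d`: vertices at distance `m + 1` have strictly larger resistance than vertices
at distance `m`. -/
theorem effective_resistance_strict_mono {V : Type*} [Fintype V] [DecidableEq V]
    (G : SimpleGraph V) [DecidableRel G.Adj] (d : ℕ) (b c : ℕ → ℕ)
    (hdr : IsDistanceRegular G d b c) (hN : 2 ≤ Fintype.card V)
    (Lp : Matrix V V ℝ) (hLp : IsMoorePenrose (G.lapMatrix ℝ) Lp)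
    (m : ℕ) (hm1 : 1 ≤ m) (hmd : m + 1 ≤ d)
    (α β β' : V) (hβ : G.dist α β = m) (hβ' : G.dist α β' = m + 1) :
    effRes Lp α β < effRes Lp α β' :=
  effective_resistance_strict_mono_general G d b c hdr Lp hLp m α β β' hβ hβ'
end

section
/- For a connected regular graph on N vertices with unit edge resistors, the average commute time of the simple random walk between vertices α and β equals N·κ·R(α,β), where κ is the degree and R(α,β) the effective resistance. -/
open Matrix Finset

/-!
The vector `h = H(·, β)` of expected hitting times of `β` solves the Laplace equation
`L h = κ 𝟙 - N κ e_β`: off `β` this is the one-step recurrence, and at `β` it is forced because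
the entries of `L h` sum to zero. On a connected graph the kernel of `L` is the constants, so `h`
agrees with `L⁺ (κ 𝟙 - N κ e_β)` up to a constant, which `H β β = 0` fixes. Adding the formulas
for `H α β` and `H β α`, the row sums of `L⁺` cancel and what is left is `N κ` times the
quadratic form `(e_α - e_β)ᵀ L⁺ (e_α - e_β)`, which is `N κ R(α, β)` since `L⁺` is symmetric.
-/

namespace IsMoorePenrose

variable {V : Type*} [Fintype V] [DecidableEq V] {L P Q : Matrix V V ℝ}

theorem transpose_s15 (h : IsMoorePenrose L P) : IsMoorePenrose Lᵀ Pᵀ := by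
  obtain ⟨h₁, h₂, h₃, h₄⟩ := h
  refine ⟨?_, ?_, ?_, ?_⟩
  · rw [← transpose_mul, ← transpose_mul, ← mul_assoc, h₁]
  · rw [← transpose_mul, ← transpose_mul, ← mul_assoc, h₂]
  · rw [← transpose_mul, transpose_transpose, h₄]
  · rw [← transpose_mul, transpose_transpose, h₃]

theorem eq_mul_mul (hP : IsMoorePenrose L P) (hQ₁ : L * Q * L = L)
    (hQ₃ : (L * Q)ᵀ = L * Q) : P = P * L * Q :=
  calc P = P * (L * P)ᵀ := by rw [hP.2.2.1, ← mul_assoc, hP.2.1]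
    _ = P * ((L * Q) * (L * P))ᵀ := by rw [← mul_assoc, hQ₁]
    _ = P * L * Q := by
      rw [transpose_mul, hP.2.2.1, hQ₃, ← mul_assoc, ← mul_assoc P, hP.2.1, mul_assoc]

theorem unique_s15 (hP : IsMoorePenrose L P) (hQ : IsMoorePenrose L Q) : P = Q := by
  have hQP : Qᵀ = Qᵀ * Lᵀ * Pᵀ := hQ.transpose_s15.eq_mul_mul hP.transpose_s15.1 hP.transpose_s15.2.2.1
  rw [← transpose_mul, ← transpose_mul, transpose_inj, ← mul_assoc] at hQP
  rw [hP.eq_mul_mul hQ.1 hQ.2.2.1, ← hQP]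

theorem transpose_eq_of_isSymm (hL : L.IsSymm) (h : IsMoorePenrose L P) : Pᵀ = P :=
  (hL ▸ h.transpose_s15).unique_s15 h

end IsMoorePenrose

namespace SimpleGraph

variable {V : Type*} [Fintype V] [DecidableEq V] {G : SimpleGraph V} [DecidableRel G.Adj]

theorem sum_lapMatrix_mulVec {R : Type*} [CommRing R] (x : V → R) :
    ∑ i, (G.lapMatrix R *ᵥ x) i = 0 := by
  calc ∑ i, (G.lapMatrix R *ᵥ x) i = (fun _ ↦ 1) ⬝ᵥ (G.lapMatrix R *ᵥ x) := by simp [dotProduct]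
    _ = 0 := by
      rw [dotProduct_mulVec, ← mulVec_transpose, (G.isSymm_lapMatrix (R := R)).eq,
        lapMatrix_mulVec_const_eq_zero, zero_dotProduct]

theorem Connected.sub_eq_sub_of_lapMatrix_mulVec_eq (hG : G.Connected) {x y : V → ℝ}
    (h : G.lapMatrix ℝ *ᵥ x = G.lapMatrix ℝ *ᵥ y) (i j : V) : x i - y i = x j - y j :=
  (lapMatrix_mulVec_eq_zero_iff_forall_reachable G (x := x - y)).mp
    (by rw [mulVec_sub, h, sub_self]) i j (hG.preconnected i j)

theorem lapMatrix_mulVec_eq_of_hitting_recurrence {κ : ℕ} (hκ : 0 < κ)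
    (hreg : G.IsRegularOfDegree κ) {h : V → ℝ} {β : V}
    (hrec : ∀ α, α ≠ β → h α = 1 + (1 / (κ : ℝ)) * ∑ γ ∈ G.neighborFinset α, h γ) :
    G.lapMatrix ℝ *ᵥ h = Function.const V (κ : ℝ) - Pi.single β ((Fintype.card V : ℝ) * κ) := by
  set g : V → ℝ := Function.const V (κ : ℝ) - Pi.single β ((Fintype.card V : ℝ) * κ)
  have hoff : ∀ x, x ≠ β → (G.lapMatrix ℝ *ᵥ h - g) x = 0 := by
    intro x hx
    have hκ' : (κ : ℝ) ≠ 0 := by positivity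
    simp only [Pi.sub_apply, g, Function.const_apply, Pi.single_eq_of_ne hx, sub_zero]
    rw [lapMatrix_mulVec_apply, hreg x, hrec x hx]
    field_simp
    ring
  have hsum : ∑ x, (G.lapMatrix ℝ *ᵥ h - g) x = 0 := by
    simp [g, sum_lapMatrix_mulVec, Finset.sum_sub_distrib]
  have hβ : (G.lapMatrix ℝ *ᵥ h - g) β = 0 := by
    rwa [← Finset.sum_eq_single_of_mem β (mem_univ β) fun x _ hx ↦ hoff x hx]
  refine sub_eq_zero.mp (funext fun x ↦ ?_)
  by_cases hx : x = β
  · exact hx ▸ hβ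
  · exact hoff x hx

theorem Connected.apply_eq_of_hitting_recurrence (hG : G.Connected) {Lp : Matrix V V ℝ}
    (hLp : G.lapMatrix ℝ * Lp * G.lapMatrix ℝ = G.lapMatrix ℝ) {κ : ℕ} (hκ : 0 < κ)
    (hreg : G.IsRegularOfDegree κ) {h : V → ℝ} {β : V}
    (hrec : ∀ α, α ≠ β → h α = 1 + (1 / (κ : ℝ)) * ∑ γ ∈ G.neighborFinset α, h γ)
    (hβ : h β = 0) (α : V) :
    h α = κ * (∑ y, Lp α y - ∑ y, Lp β y) - Fintype.card V * κ * (Lp α β - Lp β β) := by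
  have hLLp : G.lapMatrix ℝ *ᵥ (Lp *ᵥ (G.lapMatrix ℝ *ᵥ h)) = G.lapMatrix ℝ *ᵥ h := by
    rw [mulVec_mulVec, mulVec_mulVec, hLp]
  have hdiff := hG.sub_eq_sub_of_lapMatrix_mulVec_eq hLLp.symm α β
  rw [lapMatrix_mulVec_eq_of_hitting_recurrence hκ hreg hrec, hβ] at hdiff
  simp only [mulVec, dotProduct, Function.const_apply, Pi.sub_apply, mul_sub,
    Finset.sum_sub_distrib, ← Finset.sum_mul, Pi.single_apply, mul_ite, mul_zero,
    Finset.sum_ite_eq', mem_univ, if_true] at hdiff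
  linarith

end SimpleGraph

/-- `H α β` is the expected first-passage time `m(β|α)`, given through the linear system
that characterises it. -/
theorem commute_time_eq_resistance {V : Type*} [Fintype V] [DecidableEq V]
    (G : SimpleGraph V) [DecidableRel G.Adj] (κ : ℕ) (hκ : 0 < κ)
    (hconn : G.Connected) (hreg : G.IsRegularOfDegree κ)
    (H : V → V → ℝ)
    (hH0 : ∀ β : V, H β β = 0)
    (hHrec : ∀ α β : V, α ≠ β →
      H α β = 1 + (1 / (κ : ℝ)) * ∑ γ ∈ G.neighborFinset α, H γ β)
    (Lp : Matrix V V ℝ) (hLp : IsMoorePenrose (G.lapMatrix ℝ) Lp)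
    (α β : V) :
    H α β + H β α = (Fintype.card V : ℝ) * (κ : ℝ) * effRes Lp α β := by
  have hsymm : Lp β α = Lp α β := by
    rw [← transpose_apply Lp α β, hLp.transpose_eq_of_isSymm (G.isSymm_lapMatrix (R := ℝ))]
  have hαβ := hconn.apply_eq_of_hitting_recurrence hLp.1 hκ hreg (fun x hx ↦ hHrec x β hx) (hH0 β) α
  have hβα := hconn.apply_eq_of_hitting_recurrence hLp.1 hκ hreg (fun x hx ↦ hHrec x α hx) (hH0 α) β
  rw [hαβ, hβα, hsymm, effRes]
  ring
end
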